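/- arXiv:2511.20771 — 3 statements merged into one kernel-verified Lean document; each statement's English description precedes it below -/
import Mathlib

section
/- If a network N' is obtained from a network N by in-splitting (replacing two incoming arcs (u,v) and (w,v) of a vertex v of in-degree at least 3 by arcs (u,x), (w,x), (x,v) for a new vertex x), then the scanwidth of N' is at most the scanwidth of N. -/
/-- A finite digraph on vertex type `V`. -/
structure Digr (V : Type) where
  verts : Finset V
  arcs  : Finset (V × V)
  arc_mem : ∀ a ∈ arcs, a.1 ∈ verts ∧ a.2 ∈ verts ∧ a.1 ≠ a.2

namespace Digr

variable {V : Type} [DecidableEq V]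

def Adj (D : Digr V) (u v : V) : Prop := (u, v) ∈ D.arcs

def Reach (D : Digr V) : V → V → Prop := Relation.ReflTransGen D.Adj

def SReach (D : Digr V) : V → V → Prop := Relation.TransGen D.Adj

def Acyclic (D : Digr V) : Prop := ∀ v, ¬ D.SReach v v

def inDeg (D : Digr V) (v : V) : ℕ := (D.arcs.filter fun a => a.2 = v).card

def outDeg (D : Digr V) (v : V) : ℕ := (D.arcs.filter fun a => a.1 = v).card

def maxOutDeg (D : Digr V) : ℕ := D.verts.sup D.outDeg

def IsRoot (D : Digr V) (v : V) : Prop := v ∈ D.verts ∧ D.inDeg v = 0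

/-- A rooted DAG: acyclic with exactly one root. -/
def Rooted (D : Digr V) : Prop := D.Acyclic ∧ ∃! r, D.IsRoot r

/-- A rooted DAG all of whose vertices are reachable from the root. -/
def RootedConn (D : Digr V) : Prop :=
  D.Acyclic ∧ ∃ r, D.IsRoot r ∧ ∀ v ∈ D.verts, D.Reach r v

def leaves (D : Digr V) : Set V := {v | v ∈ D.verts ∧ D.outDeg v = 0}

/-- An out-tree: a rooted DAG in which every vertex has in-degree at most 1. -/
def IsOutTree (D : Digr V) : Prop := D.Rooted ∧ ∀ v ∈ D.verts, D.inDeg v ≤ 1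

/-- `Γ` is a tree extension of `D`. -/
def IsTreeExt (D Γ : Digr V) : Prop :=
  Γ.IsOutTree ∧ Γ.verts = D.verts ∧ ∀ a ∈ D.arcs, Γ.SReach a.1 a.2

/-- `GW_t(Γ) = {(u,v) ∈ A(D) | u >_Γ t ≥_Γ v}`. -/
def GW (D Γ : Digr V) (t : V) : Set (V × V) :=
  {a | a ∈ D.arcs ∧ Γ.SReach a.1 t ∧ Γ.Reach t a.2}

/-- `HW_t(Γ) = {(u,v) ∈ A(D) | u ≥_Γ t >_Γ v}`. -/
def HW (D Γ : Digr V) (t : V) : Set (V × V) :=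
  {a | a ∈ D.arcs ∧ Γ.Reach a.1 t ∧ Γ.SReach t a.2}

/-- `sw_D(Γ)`. -/
noncomputable def swOf (D Γ : Digr V) : ℕ := Γ.verts.sup fun t => (GW D Γ t).ncard

/-- The scanwidth of `D`: minimum width over all tree extensions. -/
noncomputable def scanwidth (D : Digr V) : ℕ :=
  sInf {k | ∃ Γ : Digr V, IsTreeExt D Γ ∧ swOf D Γ = k}

/-- The subgraph of `D` induced by `U` is weakly connected. -/
def WConnOn (D : Digr V) (U : Set V) : Prop :=
  ∀ u ∈ U, ∀ v ∈ U, Relation.ReflTransGen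
    (fun a b => a ∈ U ∧ b ∈ U ∧ ((a, b) ∈ D.arcs ∨ (b, a) ∈ D.arcs)) u v

/-- A canonical tree extension of `D`. -/
def Canonical (D Γ : Digr V) : Prop :=
  IsTreeExt D Γ ∧ ∀ t ∈ Γ.verts, D.WConnOn {v | Γ.Reach t v}

/-- Phylogenetic network: rooted DAG whose root has out-degree ≥ 2 and each
non-root vertex has in-degree 1 or out-degree 1, but not both. -/
def IsNetwork (N : Digr V) : Prop :=
  N.Rooted ∧ ∀ r, N.IsRoot r → 2 ≤ N.outDeg r ∧
    ∀ v ∈ N.verts, v ≠ r → Xor' (N.inDeg v = 1) (N.outDeg v = 1)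

/-- Phylogenetic tree: a network without reticulations. -/
def IsPhyloTree (T : Digr V) : Prop := T.IsNetwork ∧ ∀ v ∈ T.verts, T.inDeg v ≤ 1

def BinaryD (D : Digr V) : Prop := ∀ v ∈ D.verts, D.inDeg v ≤ 2 ∧ D.outDeg v ≤ 2

/-- One in-splitting step. -/
def InSplit (D D' : Digr V) : Prop :=
  ∃ v u w x, 3 ≤ D.inDeg v ∧ (u, v) ∈ D.arcs ∧ (w, v) ∈ D.arcs ∧ u ≠ w ∧
    x ∉ D.verts ∧ D'.verts = insert x D.verts ∧
    D'.arcs = insert (u, x) (insert (w, x) (insert (x, v)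
      ((D.arcs.erase (u, v)).erase (w, v))))

/-- One out-splitting step. -/
def OutSplit (D D' : Digr V) : Prop :=
  ∃ v u w x, 3 ≤ D.outDeg v ∧ (v, u) ∈ D.arcs ∧ (v, w) ∈ D.arcs ∧ u ≠ w ∧
    x ∉ D.verts ∧ D'.verts = insert x D.verts ∧
    D'.arcs = insert (v, x) (insert (x, u) (insert (x, w)
      ((D.arcs.erase (v, u)).erase (v, w))))

/-- Binary in-resolution: exhaustive in-splitting. -/
def BinInRes (D D' : Digr V) : Prop :=
  Relation.ReflTransGen InSplit D D' ∧ ∀ v ∈ D'.verts, D'.inDeg v ≤ 2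

/-- Binary out-resolution: exhaustive out-splitting. -/
def BinOutRes (D D' : Digr V) : Prop :=
  Relation.ReflTransGen OutSplit D D' ∧ ∀ v ∈ D'.verts, D'.outDeg v ≤ 2

/-- Binary resolution: binary out-resolution of a binary in-resolution. -/
def BinRes (D D' : Digr V) : Prop := ∃ D'' : Digr V, BinInRes D D'' ∧ BinOutRes D'' D'

def SubD (D' D : Digr V) : Prop := D'.verts ⊆ D.verts ∧ D'.arcs ⊆ D.arcs

/-- Leaf-monotone subdigraph. -/
def LeafMono (D' D : Digr V) : Prop := SubD D' D ∧ D'.leaves ⊆ D.leaves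

/-- One arc subdivision step. -/
def SubdivStep (D D' : Digr V) : Prop :=
  ∃ u v w, (u, v) ∈ D.arcs ∧ w ∉ D.verts ∧ D'.verts = insert w D.verts ∧
    D'.arcs = insert (u, w) (insert (w, v) (D.arcs.erase (u, v)))

/-- `D'` is a subdivision of `D`. -/
def IsSubdivisionOf (D' D : Digr V) : Prop := Relation.ReflTransGen SubdivStep D D'

/-- Leaf-respecting isomorphism. -/
def LeafIso (D D' : Digr V) : Prop :=
  ∃ ι : V → V, Set.BijOn ι ↑D.verts ↑D'.verts ∧
    (∀ u v, u ∈ D.verts → v ∈ D.verts → ((u, v) ∈ D.arcs ↔ (ι u, ι v) ∈ D'.arcs)) ∧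
    ∀ ℓ ∈ D.leaves, ι ℓ = ℓ

/-- `N` firmly displays `T`. -/
def FirmDisp (N T : Digr V) : Prop :=
  ∃ T' N' : Digr V, IsSubdivisionOf T' T ∧ LeafMono N' N ∧ LeafIso T' N'

/-- `N` softly displays `T`. -/
def SoftDisp (N T : Digr V) : Prop :=
  ∃ N' T' : Digr V, BinRes N N' ∧ BinRes T T' ∧ FirmDisp N' T'

def arcsOfList (l : List V) : List (V × V) := l.zip l.tail

def firstArc (l : List V) : Option (V × V) :=
  match l with
  | a :: b :: _ => some (a, b)
  | _ => none

/-- `l` is (the vertex list of) a directed path in `D`. -/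
def IsPathList (D : Digr V) (l : List V) : Prop :=
  l ≠ [] ∧ l.Nodup ∧ (∀ v ∈ l, v ∈ D.verts) ∧ l.Chain' D.Adj

/-- Eventual arc-disjointness of two paths (as vertex lists). -/
def EAD : List V → List V → Prop
  | a :: b :: p, q =>
      2 ≤ q.length ∧
        (List.Disjoint (arcsOfList (a :: b :: p)) (arcsOfList q) ∨
          (some a = q.head? ∧ EAD (b :: p) q.tail))
  | _, _ => False

/-- Soft pseudo-embedding of the set of arcs `F` (of a forest in `T`) into `N`. -/
structure IsSPE (N T : Digr V) (F : Set (V × V)) (φ : V × V → List V) : Prop where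
  path : ∀ a ∈ F, IsPathList N (φ a) ∧ 2 ≤ (φ a).length
  spe1 : ∀ x y z, (x, y) ∈ F → (y, z) ∈ F →
    (φ (x, y)).getLast? = (φ (y, z)).head?
  spe2 : ∀ x y x' y', (x, y) ∈ F → (x', y') ∈ F → x ≠ x' →
    List.Disjoint (arcsOfList (φ (x, y))) (arcsOfList (φ (x', y')))
  spe3 : ∀ x y y', (x, y) ∈ F → (x, y') ∈ F → y ≠ y' → EAD (φ (x, y)) (φ (x, y'))
  spe4 : ∀ x ℓ, (x, ℓ) ∈ F → ℓ ∈ T.leaves → (φ (x, ℓ)).getLast? = some ℓ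

/-- The downward-closed forest below a top-arc set `S`. -/
def ForestBelow (T : Digr V) (S : Set (V × V)) : Set (V × V) :=
  S ∪ {b | b ∈ T.arcs ∧ ∃ a ∈ S, T.Reach a.2 b.1}

/-- `S` is a top-arc set (an arc set whose tails have in-degree 0 in the forest below). -/
def IsTopArcSet (T : Digr V) (S : Set (V × V)) : Prop :=
  S ⊆ ↑T.arcs ∧ ∀ a ∈ S, ∀ b ∈ ForestBelow T S, b.2 ≠ a.1

def forestLeaves (T : Digr V) (S : Set (V × V)) : Set V :=
  {x | x ∈ T.leaves ∧ ∃ a ∈ ForestBelow T S, a.2 = x}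

/-- Signature `[B, S, ψ]` (with `ψ` represented as an `Option`-valued map with support `S`). -/
def IsSig (N T : Digr V) (B S : Set (V × V)) (ψ : V × V → Option (V × V)) : Prop :=
  B ⊆ ↑N.arcs ∧ IsTopArcSet T S ∧
    forestLeaves T S = {ℓ | ℓ ∈ N.leaves ∧ ∃ a ∈ B, N.Reach a.2 ℓ} ∧
    (∀ a ∈ S, ∃ b ∈ B, ψ a = some b) ∧ ∀ a, a ∉ S → ψ a = none

/-- Valid signature `[B, S, ψ]`. -/
def ValidSig (N T : Digr V) (B S : Set (V × V)) (ψ : V × V → Option (V × V)) : Prop :=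
  IsSig N T B S ψ ∧
    ∃ φ : V × V → List V, IsSPE N T (ForestBelow T S) φ ∧
      ∀ a ∈ S, firstArc (φ a) = ψ a

/-- Restriction of (the `Option`-valued) `ψ` to `S`. -/
noncomputable def restrictPsi (ψ : V × V → Option (V × V)) (S : Set (V × V)) :
    V × V → Option (V × V) := fun a =>
  @ite _ (a ∈ S) (Classical.propDecidable _) (ψ a) none

/-- Downward-closed set of arcs of `T`. -/
def DownClosed (T : Digr V) (F : Set (V × V)) : Prop :=
  F ⊆ ↑T.arcs ∧ ∀ a ∈ F, ∀ b ∈ T.arcs, T.Reach a.2 b.1 → b ∈ F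

/-- `D'` arises from `D` by attaching a new root `ρ` above the old root. -/
def AttachRoot (D : Digr V) (ρ : V) (D' : Digr V) : Prop :=
  ρ ∉ D.verts ∧ D'.verts = insert ρ D.verts ∧
    ∃ r, D.IsRoot r ∧ D'.arcs = insert (ρ, r) D.arcs

/-- Assumption (as:NTGamma): `Ns` binary network, `Ts` tree with the same leaves,
`N` and `T` obtained by attaching new roots `ρN`, `ρT`. -/
def PaperSetup (Ns Ts N T : Digr V) (ρN ρT : V) : Prop :=
  Ns.IsNetwork ∧ BinaryD Ns ∧ IsPhyloTree Ts ∧ Ts.leaves = Ns.leaves ∧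
    AttachRoot Ns ρN N ∧ AttachRoot Ts ρT T

/-! ### Stretch gadget (Definition 8, full version) -/

def UdomS (d : ℕ) : Set (ℕ × ℕ) :=
  {p | (2 ≤ p.1 ∧ p.1 ≤ d - 1 ∧ 1 ≤ p.2 ∧ p.2 ≤ p.1) ∨
    (p.1 = d ∧ 2 ≤ p.2 ∧ p.2 ≤ d - 1)}

def UPdomS (d : ℕ) : Set (ℕ × ℕ) :=
  {p | 3 ≤ p.1 ∧ p.1 ≤ d - 1 ∧ 2 ≤ p.2 ∧ p.2 ≤ p.1 - 1}

def WdomS (d : ℕ) : Set (ℕ × ℕ × ℕ) :=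
  {p | 1 ≤ p.1 ∧ p.1 ≤ d - 1 ∧ 1 ≤ p.2.1 ∧ p.2.1 ≤ d - 1 ∧ 1 ≤ p.2.2 ∧ p.2.2 ≤ 4}

/-- The arc set of the network obtained from `D` by stretching `v`. -/
def stretchArcs (D : Digr V) (v : V) (d : ℕ) (c : ℕ → V)
    (u u' : ℕ → ℕ → V) (w : ℕ → ℕ → ℕ → V) : Set (V × V) :=
  ((D.arcs : Set (V × V)) \ {a | a.1 = v}) ∪
  ({(v, u 2 1), (v, u 2 2)} : Set (V × V)) ∪
  {a | ∃ i, 2 ≤ i ∧ i ≤ d - 2 ∧ (a = (u i 1, u (i+1) 1) ∨ a = (u i 1, u (i+1) 2))} ∪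
  {a | ∃ i, 2 ≤ i ∧ i ≤ d - 2 ∧ (a = (u i i, u (i+1) i) ∨ a = (u i i, u (i+1) (i+1)))} ∪
  {a | ∃ i j, 3 ≤ i ∧ i ≤ d - 1 ∧ 2 ≤ j ∧ j ≤ i - 1 ∧ a = (u i j, u' i j)} ∪
  {a | ∃ i j, 3 ≤ i ∧ i ≤ d - 1 ∧ 2 ≤ j ∧ j ≤ i - 1 ∧
      (a = (u' i j, u (i+1) j) ∨ a = (u' i j, u (i+1) (j+1)))} ∪
  ({(u (d-1) 1, w 1 1 1), (u (d-1) 1, u d 2)} : Set (V × V)) ∪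
  ({(u (d-1) (d-1), u d (d-1)), (u (d-1) (d-1), w 1 (d-1) 2)} : Set (V × V)) ∪
  {a | ∃ j, 2 ≤ j ∧ j ≤ d - 1 ∧ a = (u d j, w 1 (j-1) 2)} ∪
  {a | ∃ i j, 1 ≤ i ∧ i ≤ d - 1 ∧ 1 ≤ j ∧ j ≤ d - 1 ∧
      (a = (w i j 1, w i j 3) ∨ a = (w i j 1, w i j 4) ∨
        a = (w i j 2, w i j 3) ∨ a = (w i j 2, w i j 4))} ∪
  {a | ∃ i j, 1 ≤ i ∧ i ≤ d - 1 ∧ 1 ≤ j ∧ j ≤ d - 2 ∧ a = (w i j 4, w i (j+1) 1)} ∪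
  {a | ∃ i, 1 ≤ i ∧ i ≤ d - 2 ∧ a = (w i 1 3, w (i+1) 1 1)} ∪
  {a | ∃ i, 1 ≤ i ∧ i ≤ d - 2 ∧ a = (w i (d-1) 4, w (i+1) (d-1) 2)} ∪
  {a | ∃ i j, 1 ≤ i ∧ i ≤ d - 2 ∧ 2 ≤ j ∧ j ≤ d - 1 ∧ a = (w i j 3, w (i+1) (j-1) 2)} ∪
  {a | ∃ j, 1 ≤ j ∧ j ≤ d - 1 ∧ a = (w (d-1) j 3, c j)} ∪
  {(w (d-1) (d-1) 4, c d)}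

/-- `D'` arises from `D` by stretching the vertex `v` (of out-degree `d ≥ 3`). -/
def StretchV (D : Digr V) (v : V) (D' : Digr V) : Prop :=
  ∃ (d : ℕ) (c : ℕ → V) (u u' : ℕ → ℕ → V) (w : ℕ → ℕ → ℕ → V),
    d = D.outDeg v ∧ 3 ≤ d ∧
    Set.BijOn c (Set.Icc 1 d) {x | (v, x) ∈ D.arcs} ∧
    Set.InjOn (fun p => u p.1 p.2) (UdomS d) ∧
    Set.InjOn (fun p => u' p.1 p.2) (UPdomS d) ∧
    Set.InjOn (fun p => w p.1 p.2.1 p.2.2) (WdomS d) ∧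
    (∀ p ∈ UdomS d, u p.1 p.2 ∉ D.verts) ∧
    (∀ p ∈ UPdomS d, u' p.1 p.2 ∉ D.verts) ∧
    (∀ p ∈ WdomS d, w p.1 p.2.1 p.2.2 ∉ D.verts) ∧
    (∀ p ∈ UdomS d, ∀ q ∈ UPdomS d, u p.1 p.2 ≠ u' q.1 q.2) ∧
    (∀ p ∈ UdomS d, ∀ q ∈ WdomS d, u p.1 p.2 ≠ w q.1 q.2.1 q.2.2) ∧
    (∀ p ∈ UPdomS d, ∀ q ∈ WdomS d, u' p.1 p.2 ≠ w q.1 q.2.1 q.2.2) ∧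
    ((D'.verts : Set V) =
      (D.verts : Set V) ∪ (fun p : ℕ × ℕ => u p.1 p.2) '' UdomS d ∪
        (fun p : ℕ × ℕ => u' p.1 p.2) '' UPdomS d ∪
        (fun p : ℕ × ℕ × ℕ => w p.1 p.2.1 p.2.2) '' WdomS d) ∧
    (D'.arcs : Set (V × V)) = stretchArcs D v d c u u' w

def StretchStep (D D' : Digr V) : Prop :=
  ∃ v ∈ D.verts, 3 ≤ D.outDeg v ∧ StretchV D v D'

/-- `N'` is `str(N)`: obtained by exhaustively stretching all vertices of
out-degree at least 3. -/
def IsStretch (N N' : Digr V) : Prop :=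
  Relation.ReflTransGen StretchStep N N' ∧ ∀ v ∈ N'.verts, N'.outDeg v ≤ 2

/-! ### Level -/

def underSG (D : Digr V) : SimpleGraph V :=
  SimpleGraph.fromRel fun a b => (a, b) ∈ D.arcs

/-- Two edges of the underlying graph lie in the same biconnected component. -/
def SameBlock (D : Digr V) (e f : Sym2 V) : Prop :=
  e = f ∨ ∃ (x : V) (wlk : (underSG D).Walk x x),
    wlk.IsCycle ∧ e ∈ wlk.edges ∧ f ∈ wlk.edges

def IsReticulation (D : Digr V) (v : V) : Prop := v ∈ D.verts ∧ 2 ≤ D.inDeg v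

/-- `D` has level at most `c`: each biconnected component of the underlying graph
contains at most `c` reticulations. -/
def LevelAtMost (D : Digr V) (c : ℕ) : Prop :=
  ∀ e ∈ (underSG D).edgeSet,
    {v | IsReticulation D v ∧
      ∃ f ∈ (underSG D).edgeSet, SameBlock D e f ∧ v ∈ f}.ncard ≤ c

end Digr

open Digr

section AuxProof
set_option linter.unusedSectionVars false

namespace Digr

variable {V : Type} [DecidableEq V]

lemma adj_of_mem {D : Digr V} {a b : V} (h : (a, b) ∈ D.arcs) : D.Adj a b := h

/-- Rank of a vertex: number of strict ancestors. -/
noncomputable def rk (D : Digr V) (v : V) : ℕ := {w | w ∈ D.verts ∧ D.SReach w v}.ncard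

lemma rk_lt {D : Digr V} (hacyc : D.Acyclic) {a b : V} (hab : (a, b) ∈ D.arcs) :
    rk D a < rk D b := by
  have hfin : {w | w ∈ D.verts ∧ D.SReach w b}.Finite :=
    D.verts.finite_toSet.subset (fun w hw => hw.1)
  apply Set.ncard_lt_ncard _ hfin
  constructor
  · intro w hw
    exact ⟨hw.1, hw.2.tail (adj_of_mem hab)⟩
  · intro hsub
    have ha : a ∈ {w | w ∈ D.verts ∧ D.SReach w b} :=
      ⟨(D.arc_mem _ hab).1, Relation.TransGen.single (adj_of_mem hab)⟩
    exact hacyc a (hsub ha).2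

/-- Injective height function on vertices, increasing along arcs. -/
noncomputable def hgt (D : Digr V) (v : V) : ℕ :=
  (if hv : v ∈ D.verts then ((D.verts.equivFin ⟨v, hv⟩ : Fin D.verts.card) : ℕ) else 0)
    + rk D v * (D.verts.card + 1)

lemma hgt_base_lt (D : Digr V) (v : V) :
    (if hv : v ∈ D.verts then ((D.verts.equivFin ⟨v, hv⟩ : Fin D.verts.card) : ℕ) else 0)
      < D.verts.card + 1 := by
  split
  · exact lt_trans (Fin.is_lt _) (Nat.lt_succ_self _)
  · exact Nat.succ_pos _

lemma hgt_lt {D : Digr V} (hacyc : D.Acyclic) {a b : V} (hab : (a, b) ∈ D.arcs) :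
    hgt D a < hgt D b := by
  have h1 := hgt_base_lt D a
  have h2 : rk D a + 1 ≤ rk D b := rk_lt hacyc hab
  unfold hgt
  nlinarith [Nat.zero_le (if hv : b ∈ D.verts then ((D.verts.equivFin ⟨b, hv⟩ : Fin D.verts.card) : ℕ) else 0)]

lemma hgt_injOn {D : Digr V} {a b : V} (ha : a ∈ D.verts) (hb : b ∈ D.verts)
    (h : hgt D a = hgt D b) : a = b := by
  have hmod : hgt D a % (D.verts.card + 1)
      = ((D.verts.equivFin ⟨a, ha⟩ : Fin D.verts.card) : ℕ) := by
    unfold hgt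
    rw [Nat.add_mul_mod_self_right, dif_pos ha,
      Nat.mod_eq_of_lt (lt_trans (Fin.is_lt _) (Nat.lt_succ_self _))]
  have hmod' : hgt D b % (D.verts.card + 1)
      = ((D.verts.equivFin ⟨b, hb⟩ : Fin D.verts.card) : ℕ) := by
    unfold hgt
    rw [Nat.add_mul_mod_self_right, dif_pos hb,
      Nat.mod_eq_of_lt (lt_trans (Fin.is_lt _) (Nat.lt_succ_self _))]
  have : (D.verts.equivFin ⟨a, ha⟩ : Fin D.verts.card)
      = (D.verts.equivFin ⟨b, hb⟩ : Fin D.verts.card) := by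
    apply Fin.val_injective
    rw [← hmod, ← hmod', h]
  have := D.verts.equivFin.injective this
  exact congrArg Subtype.val this

/-- The chain (path) through the vertices ordered by `hgt`. -/
noncomputable def chainExt (D : Digr V) : Digr V where
  verts := D.verts
  arcs := (D.verts ×ˢ D.verts).filter (fun a => hgt D a.1 < hgt D a.2 ∧
    ∀ c ∈ D.verts, hgt D c ≤ hgt D a.1 ∨ hgt D a.2 ≤ hgt D c)
  arc_mem := by
    intro a ha
    rw [Finset.mem_filter, Finset.mem_product] at ha
    refine ⟨ha.1.1, ha.1.2, ?_⟩
    intro hEq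
    exact absurd (hEq ▸ ha.2.1) (lt_irrefl _)

lemma chain_adj_iff {D : Digr V} {a b : V} :
    (chainExt D).Adj a b ↔ a ∈ D.verts ∧ b ∈ D.verts ∧ hgt D a < hgt D b ∧
      ∀ c ∈ D.verts, hgt D c ≤ hgt D a ∨ hgt D b ≤ hgt D c := by
  show (a, b) ∈ Finset.filter _ _ ↔ _
  rw [Finset.mem_filter, Finset.mem_product]
  tauto

lemma chain_sreach_lt {D : Digr V} {a b : V} (h : (chainExt D).SReach a b) :
    hgt D a < hgt D b ∧ a ∈ D.verts ∧ b ∈ D.verts := by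
  induction h with
  | single h' =>
    rw [chain_adj_iff] at h'
    exact ⟨h'.2.2.1, h'.1, h'.2.1⟩
  | tail _ h' ih =>
    rw [chain_adj_iff] at h'
    exact ⟨lt_trans ih.1 h'.2.2.1, ih.2.1, h'.2.1⟩

lemma chain_acyclic (D : Digr V) : (chainExt D).Acyclic := by
  intro v hv
  exact absurd (chain_sreach_lt hv).1 (lt_irrefl _)

lemma chain_adj_into {D : Digr V} {b : V} (hb : b ∈ D.verts)
    (hne : ∃ c ∈ D.verts, hgt D c < hgt D b) : ∃ a, (chainExt D).Adj a b := by
  obtain ⟨a, ha, hmax⟩ := Finset.exists_max_image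
    (D.verts.filter fun c => hgt D c < hgt D b) (hgt D)
    (by obtain ⟨c, hc, hlt⟩ := hne; exact ⟨c, Finset.mem_filter.2 ⟨hc, hlt⟩⟩)
  rw [Finset.mem_filter] at ha
  refine ⟨a, chain_adj_iff.2 ⟨ha.1, hb, ha.2, ?_⟩⟩
  intro c hc
  by_cases hlt : hgt D c < hgt D b
  · exact Or.inl (hmax c (Finset.mem_filter.2 ⟨hc, hlt⟩))
  · exact Or.inr (le_of_not_gt hlt)

lemma chain_inDeg_le (D : Digr V) (b : V) : (chainExt D).inDeg b ≤ 1 := by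
  rw [inDeg, Finset.card_le_one]
  rintro ⟨a₁, b₁⟩ h1 ⟨a₂, b₂⟩ h2
  rw [Finset.mem_filter] at h1 h2
  have e1 := chain_adj_iff.1 (adj_of_mem h1.1)
  have e2 := chain_adj_iff.1 (adj_of_mem h2.1)
  cases h1.2; cases h2.2
  have hle1 := (e1.2.2.2 a₂ e2.1).resolve_right (not_le.2 e2.2.2.1)
  have hle2 := (e2.2.2.2 a₁ e1.1).resolve_right (not_le.2 e1.2.2.1)
  have : a₁ = a₂ := hgt_injOn e1.1 e2.1 (le_antisymm hle2 hle1)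
  rw [this]

lemma chain_sreach_of_lt (D : Digr V) :
    ∀ k, ∀ b ∈ D.verts, (D.verts.filter fun c => hgt D c < hgt D b).card ≤ k →
      ∀ a ∈ D.verts, hgt D a < hgt D b → (chainExt D).SReach a b := by
  intro k
  induction k with
  | zero =>
    intro b _ hcard a ha hlt
    have hmem : a ∈ D.verts.filter fun c => hgt D c < hgt D b := Finset.mem_filter.2 ⟨ha, hlt⟩
    have := Finset.card_pos.2 ⟨a, hmem⟩
    omega
  | succ k ih =>
    intro b hb hcard a ha hlt
    obtain ⟨a', hadj⟩ := chain_adj_into hb ⟨a, ha, hlt⟩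
    have e := chain_adj_iff.1 hadj
    by_cases heq : a = a'
    · exact Relation.TransGen.single (heq ▸ hadj)
    · have hle : hgt D a ≤ hgt D a' := (e.2.2.2 a ha).resolve_right (not_le.2 hlt)
      have hlt' : hgt D a < hgt D a' :=
        lt_of_le_of_ne hle (fun hc => heq (hgt_injOn ha e.1 hc))
      have hsub : (D.verts.filter fun c => hgt D c < hgt D a') ⊆
          (D.verts.filter fun c => hgt D c < hgt D b).erase a' := by
        intro c hc
        rw [Finset.mem_filter] at hc
        refine Finset.mem_erase.2 ⟨?_, Finset.mem_filter.2 ⟨hc.1, lt_trans hc.2 e.2.2.1⟩⟩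
        intro hceq
        exact absurd hc.2 (by rw [hceq]; exact lt_irrefl _)
      have hcard' : (D.verts.filter fun c => hgt D c < hgt D a').card ≤ k := by
        have h1 := Finset.card_le_card hsub
        have h2 : ((D.verts.filter fun c => hgt D c < hgt D b).erase a').card
            < (D.verts.filter fun c => hgt D c < hgt D b).card :=
          Finset.card_erase_lt_of_mem (Finset.mem_filter.2 ⟨e.1, e.2.2.1⟩)
        omega
      exact (ih a' e.1 hcard' a ha hlt').tail hadj

theorem exists_treeExt (D : Digr V) (hacyc : D.Acyclic) (hne : D.verts.Nonempty) :
    ∃ Γ : Digr V, IsTreeExt D Γ := by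
  refine ⟨chainExt D, ⟨⟨chain_acyclic D, ?_⟩, fun v _ => chain_inDeg_le D v⟩, rfl, ?_⟩
  · -- unique root
    obtain ⟨m, hm, hmin⟩ := Finset.exists_min_image D.verts (hgt D) hne
    refine ⟨m, ⟨hm, ?_⟩, ?_⟩
    · rw [inDeg, Finset.card_eq_zero]
      rw [Finset.eq_empty_iff_forall_notMem]
      rintro ⟨a, b⟩ hab
      rw [Finset.mem_filter] at hab
      have e := chain_adj_iff.1 (adj_of_mem hab.1)
      cases hab.2
      exact absurd (hmin a e.1) (not_le.2 e.2.2.1)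
    · rintro v ⟨hv, hdeg⟩
      by_contra hne'
      have hv' : v ∈ D.verts := hv
      have hlt : hgt D m < hgt D v :=
        lt_of_le_of_ne (hmin v hv') (fun hc => hne' (hgt_injOn (D := D) hv' hm hc.symm))
      obtain ⟨a, hadj⟩ := chain_adj_into (D := D) hv' ⟨m, hm, hlt⟩
      have : (a, v) ∈ (chainExt D).arcs.filter (fun p => p.2 = v) :=
        Finset.mem_filter.2 ⟨hadj, rfl⟩
      rw [inDeg, Finset.card_eq_zero] at hdeg
      rw [hdeg] at this
      exact absurd this (Finset.notMem_empty _)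
  · -- arcs realized
    rintro ⟨a, b⟩ hab
    have ha := (D.arc_mem _ hab).1
    have hb := (D.arc_mem _ hab).2.1
    exact chain_sreach_of_lt D _ b hb le_rfl a ha (hgt_lt hacyc hab)

end Digr

end AuxProof

section AuxProof2
set_option linter.unusedSectionVars false
set_option maxHeartbeats 1000000

namespace Digr

variable {V : Type} [DecidableEq V]

lemma sreach_of_reach_ne {D : Digr V} {a b : V} (h : D.Reach a b) (hne : a ≠ b) :
    D.SReach a b := by
  rcases h.cases_head with heq | ⟨c, hac, hcb⟩
  · exact absurd heq hne
  · exact Relation.TransGen.head' hac hcb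

/-- Insert `x` between `p` and its child `v` in `Γ`. -/
noncomputable def extTree (Γ : Digr V) (p x v : V) : Digr V where
  verts := insert x Γ.verts
  arcs := if h : p ∈ Γ.verts ∧ v ∈ Γ.verts ∧ x ∉ Γ.verts then
    insert (p, x) (insert (x, v) (Γ.arcs.erase (p, v))) else ∅
  arc_mem := by
    intro a ha
    split at ha
    case isTrue h =>
      rcases Finset.mem_insert.1 ha with rfl | ha
      · exact ⟨Finset.mem_insert_of_mem h.1, Finset.mem_insert_self _ _,
          show p ≠ x from fun hc => h.2.2 (hc ▸ h.1)⟩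
      rcases Finset.mem_insert.1 ha with rfl | ha
      · exact ⟨Finset.mem_insert_self _ _, Finset.mem_insert_of_mem h.2.1,
          show x ≠ v from fun hc => h.2.2 (by rw [hc]; exact h.2.1)⟩
      · have ha' := Finset.mem_of_mem_erase ha
        have := Γ.arc_mem a ha'
        exact ⟨Finset.mem_insert_of_mem this.1, Finset.mem_insert_of_mem this.2.1, this.2.2⟩
    case isFalse => exact absurd ha (Finset.notMem_empty a)

variable {Γ : Digr V} {p x v : V}

lemma extTree_verts : (extTree Γ p x v).verts = insert x Γ.verts := rfl

lemma extTree_arcs (hpv : (p, v) ∈ Γ.arcs) (hx : x ∉ Γ.verts) :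
    (extTree Γ p x v).arcs = insert (p, x) (insert (x, v) (Γ.arcs.erase (p, v))) :=
  dif_pos ⟨(Γ.arc_mem _ hpv).1, (Γ.arc_mem _ hpv).2.1, hx⟩

lemma ext_adj_iff (hpv : (p, v) ∈ Γ.arcs) (hx : x ∉ Γ.verts) {a b : V} :
    (extTree Γ p x v).Adj a b ↔
      (a = p ∧ b = x) ∨ (a = x ∧ b = v) ∨ ((a, b) ∈ Γ.arcs ∧ (a, b) ≠ (p, v)) := by
  show (a, b) ∈ (extTree Γ p x v).arcs ↔ _
  rw [extTree_arcs hpv hx, Finset.mem_insert, Finset.mem_insert, Finset.mem_erase]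
  simp only [Prod.mk.injEq, ne_eq]
  tauto

lemma ext_reach_map (hpv : (p, v) ∈ Γ.arcs) (hx : x ∉ Γ.verts) {a b : V}
    (h : (extTree Γ p x v).Reach a b) :
    Γ.Reach (if a = x then v else a) (if b = x then v else b) := by
  have haux : ∀ y ∈ Γ.verts, y ≠ x := fun y hy hc => hx (hc ▸ hy)
  induction h with
  | refl => exact Relation.ReflTransGen.refl
  | tail h1 h2 ih =>
    refine ih.trans ?_
    rcases (ext_adj_iff hpv hx).1 h2 with ⟨rfl, rfl⟩ | ⟨rfl, rfl⟩ | ⟨hm, _⟩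
    · rw [if_neg (haux _ (Γ.arc_mem _ hpv).1), if_pos rfl]
      exact Relation.ReflTransGen.single hpv
    · rw [if_pos rfl, if_neg (haux _ (Γ.arc_mem _ hpv).2.1)]
    · rw [if_neg (haux _ (Γ.arc_mem _ hm).1), if_neg (haux _ (Γ.arc_mem _ hm).2.1)]
      exact Relation.ReflTransGen.single hm

lemma ext_reach_map' (hpv : (p, v) ∈ Γ.arcs) (hx : x ∉ Γ.verts) {a b : V}
    (h : (extTree Γ p x v).Reach a b) :
    Γ.Reach (if a = x then p else a) (if b = x then p else b) := by
  have haux : ∀ y ∈ Γ.verts, y ≠ x := fun y hy hc => hx (hc ▸ hy)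
  induction h with
  | refl => exact Relation.ReflTransGen.refl
  | tail h1 h2 ih =>
    refine ih.trans ?_
    rcases (ext_adj_iff hpv hx).1 h2 with ⟨rfl, rfl⟩ | ⟨rfl, rfl⟩ | ⟨hm, _⟩
    · rw [if_neg (haux _ (Γ.arc_mem _ hpv).1), if_pos rfl]
    · rw [if_pos rfl, if_neg (haux _ (Γ.arc_mem _ hpv).2.1)]
      exact Relation.ReflTransGen.single hpv
    · rw [if_neg (haux _ (Γ.arc_mem _ hm).1), if_neg (haux _ (Γ.arc_mem _ hm).2.1)]
      exact Relation.ReflTransGen.single hm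

lemma ext_sreach_old (hpv : (p, v) ∈ Γ.arcs) (hx : x ∉ Γ.verts) {a b : V}
    (ha : a ≠ x) (hb : b ≠ x) (h : (extTree Γ p x v).SReach a b) : Γ.SReach a b := by
  have haux : ∀ y ∈ Γ.verts, y ≠ x := fun y hy hc => hx (hc ▸ hy)
  obtain ⟨c, hac, hcb⟩ := Relation.TransGen.tail'_iff.1 h
  rcases (ext_adj_iff hpv hx).1 hcb with ⟨rfl, rfl⟩ | ⟨rfl, rfl⟩ | ⟨hm, _⟩
  · exact absurd rfl hb
  · have := ext_reach_map' hpv hx hac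
    rw [if_neg ha, if_pos rfl] at this
    exact Relation.TransGen.tail' this hpv
  · have hcx : c ≠ x := haux c (Γ.arc_mem _ hm).1
    have := ext_reach_map hpv hx hac
    rw [if_neg ha, if_neg hcx] at this
    exact Relation.TransGen.tail' this hm

lemma ext_sreach_to_x (hpv : (p, v) ∈ Γ.arcs) (hx : x ∉ Γ.verts) {a : V}
    (ha : a ≠ x) (h : (extTree Γ p x v).SReach a x) : Γ.Reach a p := by
  have haux : ∀ y ∈ Γ.verts, y ≠ x := fun y hy hc => hx (hc ▸ hy)
  obtain ⟨c, hac, hcx⟩ := Relation.TransGen.tail'_iff.1 h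
  rcases (ext_adj_iff hpv hx).1 hcx with ⟨hc1, _⟩ | ⟨_, hc2⟩ | ⟨hm, _⟩
  · rw [hc1] at hac
    have := ext_reach_map' hpv hx hac
    rw [if_neg ha, if_neg (haux _ (Γ.arc_mem _ hpv).1)] at this
    exact this
  · exact absurd hc2.symm (haux _ (Γ.arc_mem _ hpv).2.1)
  · exact absurd (Γ.arc_mem _ hm).2.1 hx

lemma ext_sreach_from_x (hpv : (p, v) ∈ Γ.arcs) (hx : x ∉ Γ.verts) {b : V}
    (hb : b ≠ x) (h : (extTree Γ p x v).SReach x b) : Γ.Reach v b := by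
  have haux : ∀ y ∈ Γ.verts, y ≠ x := fun y hy hc => hx (hc ▸ hy)
  obtain ⟨c, hxc, hcb⟩ := Relation.TransGen.head'_iff.1 h
  rcases (ext_adj_iff hpv hx).1 hxc with ⟨hc1, _⟩ | ⟨_, hc2⟩ | ⟨hm, _⟩
  · exact absurd hc1.symm (haux _ (Γ.arc_mem _ hpv).1)
  · rw [hc2] at hcb
    have := ext_reach_map hpv hx hcb
    rw [if_neg (haux _ (Γ.arc_mem _ hpv).2.1), if_neg hb] at this
    exact this
  · exact absurd (Γ.arc_mem _ hm).1 hx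

lemma ext_reach_up (hpv : (p, v) ∈ Γ.arcs) (hx : x ∉ Γ.verts) {a b : V}
    (h : Γ.Reach a b) : (extTree Γ p x v).Reach a b := by
  induction h with
  | refl => exact Relation.ReflTransGen.refl
  | @tail b' c' h1 h2 ih =>
    by_cases hc : (b', c') = (p, v)
    · rw [Prod.mk.injEq] at hc
      obtain ⟨rfl, rfl⟩ := hc
      exact (ih.tail ((ext_adj_iff hpv hx).2 (Or.inl ⟨rfl, rfl⟩))).tail
        ((ext_adj_iff hpv hx).2 (Or.inr (Or.inl ⟨rfl, rfl⟩)))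
    · exact ih.tail ((ext_adj_iff hpv hx).2 (Or.inr (Or.inr ⟨h2, hc⟩)))

lemma ext_sreach_up (hpv : (p, v) ∈ Γ.arcs) (hx : x ∉ Γ.verts) {a b : V}
    (h : Γ.SReach a b) : (extTree Γ p x v).SReach a b := by
  obtain ⟨c, hac, hcb⟩ := Relation.TransGen.head'_iff.1 h
  have h1 : (extTree Γ p x v).SReach a c := by
    by_cases hc : (a, c) = (p, v)
    · rw [Prod.mk.injEq] at hc
      obtain ⟨rfl, rfl⟩ := hc
      exact (Relation.TransGen.single ((ext_adj_iff hpv hx).2 (Or.inl ⟨rfl, rfl⟩))).tail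
        ((ext_adj_iff hpv hx).2 (Or.inr (Or.inl ⟨rfl, rfl⟩)))
    · exact Relation.TransGen.single ((ext_adj_iff hpv hx).2 (Or.inr (Or.inr ⟨hac, hc⟩)))
  exact Relation.TransGen.trans_left h1 (ext_reach_up hpv hx hcb)

lemma ext_acyclic (hpv : (p, v) ∈ Γ.arcs) (hx : x ∉ Γ.verts) (hac : Γ.Acyclic) :
    (extTree Γ p x v).Acyclic := by
  have haux : ∀ y ∈ Γ.verts, y ≠ x := fun y hy hc => hx (hc ▸ hy)
  intro t ht
  by_cases htx : t = x
  · rw [htx] at ht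
    obtain ⟨c, hxc, hcx⟩ := Relation.TransGen.head'_iff.1 ht
    rcases (ext_adj_iff hpv hx).1 hxc with ⟨hc1, _⟩ | ⟨_, hc2⟩ | ⟨hm, _⟩
    · exact absurd hc1.symm (haux _ (Γ.arc_mem _ hpv).1)
    · rw [hc2] at hcx
      have hvx : v ≠ x := haux _ (Γ.arc_mem _ hpv).2.1
      have hs := sreach_of_reach_ne hcx hvx
      exact hac v (Relation.TransGen.tail' (ext_sreach_to_x hpv hx hvx hs) hpv)
    · exact absurd (Γ.arc_mem _ hm).1 hx
  · exact hac t (ext_sreach_old hpv hx htx htx ht)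

lemma ext_inDeg_x (hpv : (p, v) ∈ Γ.arcs) (hx : x ∉ Γ.verts) :
    (extTree Γ p x v).inDeg x = 1 := by
  have haux : ∀ y ∈ Γ.verts, y ≠ x := fun y hy hc => hx (hc ▸ hy)
  have hkey : (extTree Γ p x v).arcs.filter (fun a => a.2 = x) = {(p, x)} := by
    apply Finset.ext
    rintro ⟨a, b⟩
    rw [Finset.mem_filter, extTree_arcs hpv hx, Finset.mem_insert, Finset.mem_insert,
      Finset.mem_erase, Finset.mem_singleton]
    simp only [Prod.mk.injEq, ne_eq]
    constructor
    · rintro ⟨h1 | h1 | h1, h2⟩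
      · exact h1
      · exact absurd (h1.2.symm.trans h2) (haux _ (Γ.arc_mem _ hpv).2.1)
      · exact absurd (h2 ▸ (Γ.arc_mem _ h1.2).2.1) hx
    · rintro ⟨h1, h2⟩
      exact ⟨Or.inl ⟨h1, h2⟩, h2⟩
  unfold inDeg
  rw [hkey, Finset.card_singleton]

lemma ext_inDeg_v (hpv : (p, v) ∈ Γ.arcs) (hx : x ∉ Γ.verts)
    (huniq : ∀ q, Γ.Adj q v → q = p) : (extTree Γ p x v).inDeg v = 1 := by
  have haux : ∀ y ∈ Γ.verts, y ≠ x := fun y hy hc => hx (hc ▸ hy)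
  have hkey : (extTree Γ p x v).arcs.filter (fun a => a.2 = v) = {(x, v)} := by
    apply Finset.ext
    rintro ⟨a, b⟩
    rw [Finset.mem_filter, extTree_arcs hpv hx, Finset.mem_insert, Finset.mem_insert,
      Finset.mem_erase, Finset.mem_singleton]
    simp only [Prod.mk.injEq, ne_eq]
    constructor
    · rintro ⟨h1 | h1 | h1, h2⟩
      · exact absurd (h1.2.symm.trans h2) (Ne.symm (haux _ (Γ.arc_mem _ hpv).2.1))
      · exact h1
      · exact absurd ⟨huniq a (h2 ▸ h1.2), h2⟩ h1.1
    · rintro ⟨h1, h2⟩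
      exact ⟨Or.inr (Or.inl ⟨h1, h2⟩), h2⟩
  unfold inDeg
  rw [hkey, Finset.card_singleton]

lemma ext_inDeg_other (hpv : (p, v) ∈ Γ.arcs) (hx : x ∉ Γ.verts) {z : V}
    (hzx : z ≠ x) (hzv : z ≠ v) : (extTree Γ p x v).inDeg z = Γ.inDeg z := by
  have hkey : (extTree Γ p x v).arcs.filter (fun a => a.2 = z) =
      Γ.arcs.filter (fun a => a.2 = z) := by
    apply Finset.ext
    rintro ⟨a, b⟩
    rw [Finset.mem_filter, Finset.mem_filter, extTree_arcs hpv hx, Finset.mem_insert,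
      Finset.mem_insert, Finset.mem_erase]
    simp only [Prod.mk.injEq, ne_eq]
    constructor
    · rintro ⟨h1 | h1 | h1, h2⟩
      · exact absurd (h1.2.symm.trans h2) (Ne.symm hzx)
      · exact absurd (h1.2.symm.trans h2) (Ne.symm hzv)
      · exact ⟨h1.2, h2⟩
    · rintro ⟨h1, h2⟩
      refine ⟨Or.inr (Or.inr ⟨?_, h1⟩), h2⟩
      rintro ⟨-, hbv⟩
      exact hzv ((hbv ▸ h2 : v = z)).symm
  unfold inDeg
  rw [hkey]

end Digr

end AuxProof2

section AuxProof3
set_option linter.unusedSectionVars false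
set_option maxHeartbeats 2000000

namespace Digr

variable {V : Type} [DecidableEq V]

theorem insplit_treeExt {N N' Γ : Digr V} (hsp : InSplit N N') (hΓ : IsTreeExt N Γ) :
    ∃ Γ' : Digr V, IsTreeExt N' Γ' ∧ swOf N' Γ' ≤ swOf N Γ := by
  obtain ⟨v, u, w, x, hdeg, huv, hwv, huw, hxN, hverts', harcs'⟩ := hsp
  obtain ⟨⟨⟨hac, hroot⟩, hdeg1⟩, hVeq, hreal⟩ := hΓ
  have hx : x ∉ Γ.verts := by rw [hVeq]; exact hxN
  have haux : ∀ y ∈ Γ.verts, y ≠ x := fun y hy hc => hx (hc ▸ hy)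
  have hvV : v ∈ Γ.verts := by rw [hVeq]; exact (N.arc_mem _ huv).2.1
  have huV : u ∈ Γ.verts := by rw [hVeq]; exact (N.arc_mem _ huv).1
  have hwV : w ∈ Γ.verts := by rw [hVeq]; exact (N.arc_mem _ hwv).1
  have hvx : v ≠ x := haux _ hvV
  have hux : u ≠ x := haux _ huV
  have hwx : w ≠ x := haux _ hwV
  have hNmem : ∀ a ∈ N.arcs, (a : V × V).1 ≠ x ∧ a.2 ≠ x := fun a ha =>
    ⟨haux _ (by rw [hVeq]; exact (N.arc_mem _ ha).1),
     haux _ (by rw [hVeq]; exact (N.arc_mem _ ha).2.1)⟩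
  -- the parent of v in Γ
  obtain ⟨p, hup, hpv⟩ := Relation.TransGen.tail'_iff.1 (hreal (u, v) huv)
  have hpv' : (p, v) ∈ Γ.arcs := hpv
  have hpV : p ∈ Γ.verts := (Γ.arc_mem _ hpv').1
  have huniq : ∀ q, Γ.Adj q v → q = p := by
    intro q hq
    have h1 : (q, v) ∈ Γ.arcs.filter (fun a => a.2 = v) := Finset.mem_filter.2 ⟨hq, rfl⟩
    have h2 : (p, v) ∈ Γ.arcs.filter (fun a => a.2 = v) := Finset.mem_filter.2 ⟨hpv', rfl⟩
    have := Finset.card_le_one.1 (hdeg1 v hvV) _ h1 _ h2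
    exact congrArg Prod.fst this
  have hreach_par : ∀ a, Γ.SReach a v → Γ.Reach a p := by
    intro a hsv
    obtain ⟨c, hrc, hcv⟩ := Relation.TransGen.tail'_iff.1 hsv
    rw [huniq c hcv] at hrc
    exact hrc
  set Γ' := extTree Γ p x v with hΓ'def
  have adj_px : Γ'.Adj p x := (ext_adj_iff hpv' hx).2 (Or.inl ⟨rfl, rfl⟩)
  have adj_xv : Γ'.Adj x v := (ext_adj_iff hpv' hx).2 (Or.inr (Or.inl ⟨rfl, rfl⟩))
  have hac' : Γ'.Acyclic := ext_acyclic hpv' hx hac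
  have hN'mem : ∀ a : V × V, a ∈ N'.arcs ↔ a = (u, x) ∨ a = (w, x) ∨ a = (x, v) ∨
      (a ∈ N.arcs ∧ a ≠ (u, v) ∧ a ≠ (w, v)) := by
    intro a
    rw [harcs', Finset.mem_insert, Finset.mem_insert, Finset.mem_insert,
      Finset.mem_erase, Finset.mem_erase]
    tauto
  -- Γ' is a tree extension of N'
  have htree' : IsTreeExt N' Γ' := by
    refine ⟨⟨⟨hac', ?_⟩, ?_⟩, ?_, ?_⟩
    · -- unique root
      obtain ⟨r, ⟨hrV, hr0⟩, hruniq⟩ := hroot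
      have hvpos : 0 < Γ.inDeg v :=
        Finset.card_pos.2 ⟨(p, v), Finset.mem_filter.2 ⟨hpv', rfl⟩⟩
      have hrx : r ≠ x := haux _ hrV
      have hrv : r ≠ v := fun hc => by rw [hc] at hr0; omega
      refine ⟨r, ⟨Finset.mem_insert_of_mem hrV, ?_⟩, ?_⟩
      · rw [show Γ'.inDeg r = Γ.inDeg r from ext_inDeg_other hpv' hx hrx hrv]
        exact hr0
      · rintro q ⟨hqV, hq0⟩
        have hqx : q ≠ x := by
          intro hc
          rw [hc, show Γ'.inDeg x = 1 from ext_inDeg_x hpv' hx] at hq0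
          exact one_ne_zero hq0
        have hqv : q ≠ v := by
          intro hc
          rw [hc, show Γ'.inDeg v = 1 from ext_inDeg_v hpv' hx huniq] at hq0
          exact one_ne_zero hq0
        have hqV' : q ∈ Γ.verts := by
          rcases Finset.mem_insert.1 (show q ∈ insert x Γ.verts from hqV) with h | h
          · exact absurd h hqx
          · exact h
        refine hruniq q ⟨hqV', ?_⟩
        rw [← show Γ'.inDeg q = Γ.inDeg q from ext_inDeg_other hpv' hx hqx hqv]
        exact hq0
    · -- in-degrees
      intro z hz
      by_cases hzx : z = x
      · rw [hzx, show Γ'.inDeg x = 1 from ext_inDeg_x hpv' hx]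
      · by_cases hzv : z = v
        · rw [hzv, show Γ'.inDeg v = 1 from ext_inDeg_v hpv' hx huniq]
        · rw [show Γ'.inDeg z = Γ.inDeg z from ext_inDeg_other hpv' hx hzx hzv]
          refine hdeg1 z ?_
          rcases Finset.mem_insert.1 (show z ∈ insert x Γ.verts from hz) with h | h
          · exact absurd h hzx
          · exact h
    · show insert x Γ.verts = N'.verts
      rw [hverts', hVeq]
    · rintro a ha
      rcases (hN'mem a).1 ha with rfl | rfl | rfl | ⟨hm, -, -⟩
      · exact Relation.TransGen.tail'
          (ext_reach_up hpv' hx (hreach_par u (hreal (u, v) huv))) adj_px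
      · exact Relation.TransGen.tail'
          (ext_reach_up hpv' hx (hreach_par w (hreal (w, v) hwv))) adj_px
      · exact Relation.TransGen.single adj_xv
      · exact ext_sreach_up hpv' hx (hreal a hm)
  -- width bound
  have hGWfin : ∀ t, (GW N Γ t).Finite := fun t =>
    N.arcs.finite_toSet.subset (fun a ha => ha.1)
  set g : V × V → V × V :=
    fun a => if a.1 = x then (u, v) else if a.2 = x then (a.1, v) else a with hgdef
  have g_ux : g (u, x) = (u, v) := by simp [hgdef, hux]
  have g_wx : g (w, x) = (w, v) := by simp [hgdef, hwx]
  have g_xv : g (x, v) = (u, v) := by simp [hgdef]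
  have g_old : ∀ a ∈ N.arcs, g a = a := by
    intro a ha
    have := hNmem a ha
    simp [hgdef, this.1, this.2]
  have key : ∀ t ∈ Γ'.verts, (GW N' Γ' t).ncard ≤ swOf N Γ := by
    intro t ht
    have hnot_both : ¬ ((Γ'.Reach t x) ∧ (Γ'.SReach x t)) := by
      rintro ⟨h1, h2⟩
      exact hac' x (Relation.TransGen.trans_left h2 h1)
    have hinj : Set.InjOn g (GW N' Γ' t) := by
      intro a ha b hb heq
      rcases (hN'mem a).1 ha.1 with rfl | rfl | rfl | ⟨hmA, hA1, hA2⟩ <;>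
        rcases (hN'mem b).1 hb.1 with rfl | rfl | rfl | ⟨hmB, hB1, hB2⟩
      · rfl
      · rw [g_ux, g_wx, Prod.mk.injEq] at heq
        exact absurd heq.1 huw
      · exact absurd ⟨ha.2.2, hb.2.1⟩ hnot_both
      · rw [g_ux, g_old b hmB] at heq
        exact absurd heq.symm hB1
      · rw [g_ux, g_wx, Prod.mk.injEq] at heq
        exact absurd heq.1.symm huw
      · rfl
      · exact absurd ⟨ha.2.2, hb.2.1⟩ hnot_both
      · rw [g_wx, g_old b hmB] at heq
        exact absurd heq.symm hB2
      · exact absurd ⟨hb.2.2, ha.2.1⟩ hnot_both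
      · exact absurd ⟨hb.2.2, ha.2.1⟩ hnot_both
      · rfl
      · rw [g_xv, g_old b hmB] at heq
        exact absurd heq.symm hB1
      · rw [g_ux, g_old a hmA] at heq
        exact absurd heq hA1
      · rw [g_wx, g_old a hmA] at heq
        exact absurd heq hA2
      · rw [g_xv, g_old a hmA] at heq
        exact absurd heq hA1
      · rw [g_old a hmA, g_old b hmB] at heq
        exact heq
    by_cases htx : t = x
    · rw [htx]
      have hmaps : ∀ a ∈ GW N' Γ' x, g a ∈ GW N Γ v := by
        intro a ha
        rcases (hN'mem a).1 ha.1 with rfl | rfl | rfl | ⟨hm, -, -⟩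
        · rw [g_ux]
          exact ⟨huv, hreal (u, v) huv, Relation.ReflTransGen.refl⟩
        · rw [g_wx]
          exact ⟨hwv, hreal (w, v) hwv, Relation.ReflTransGen.refl⟩
        · exact absurd ha.2.1 (hac' x)
        · rw [g_old a hm]
          have hne := hNmem a hm
          refine ⟨hm, Relation.TransGen.tail'
            (ext_sreach_to_x hpv' hx hne.1 ha.2.1) hpv, ?_⟩
          exact ext_sreach_from_x hpv' hx hne.2
            (sreach_of_reach_ne ha.2.2 (Ne.symm hne.2))
      have hinj' : Set.InjOn g (GW N' Γ' x) := htx ▸ hinj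
      calc (GW N' Γ' x).ncard ≤ (GW N Γ v).ncard :=
            Set.ncard_le_ncard_of_injOn g hmaps hinj' (hGWfin v)
        _ ≤ swOf N Γ := Finset.le_sup (f := fun t => (GW N Γ t).ncard) hvV
    · by_cases htv : t = v
      · rw [htv]
        have hmaps : ∀ a ∈ GW N' Γ' v, g a ∈ GW N Γ v := by
          intro a ha
          rcases (hN'mem a).1 ha.1 with rfl | rfl | rfl | ⟨hm, -, -⟩
          · exact absurd (Relation.TransGen.tail'
              (ext_sreach_to_x hpv' hx hvx (sreach_of_reach_ne ha.2.2 hvx)) hpv) (hac v)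
          · exact absurd (Relation.TransGen.tail'
              (ext_sreach_to_x hpv' hx hvx (sreach_of_reach_ne ha.2.2 hvx)) hpv) (hac v)
          · rw [g_xv]
            exact ⟨huv, hreal (u, v) huv, Relation.ReflTransGen.refl⟩
          · rw [g_old a hm]
            have hne := hNmem a hm
            have hmap := ext_reach_map hpv' hx ha.2.2
            rw [if_neg hvx, if_neg hne.2] at hmap
            exact ⟨hm, ext_sreach_old hpv' hx hne.1 hvx ha.2.1, hmap⟩
        have hinj' : Set.InjOn g (GW N' Γ' v) := htv ▸ hinj
        calc (GW N' Γ' v).ncard ≤ (GW N Γ v).ncard :=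
              Set.ncard_le_ncard_of_injOn g hmaps hinj' (hGWfin v)
          _ ≤ swOf N Γ := Finset.le_sup (f := fun t => (GW N Γ t).ncard) hvV
      · have htΓ : t ∈ Γ.verts := by
          rcases Finset.mem_insert.1 (show t ∈ insert x Γ.verts from ht) with h | h
          · exact absurd h htx
          · exact h
        have hreach_tv : Γ'.Reach t x → Γ.Reach t v := by
          intro h
          have hs : Γ'.SReach t x := sreach_of_reach_ne h htx
          exact (ext_sreach_to_x hpv' hx htx hs).tail hpv
        have hmaps : ∀ a ∈ GW N' Γ' t, g a ∈ GW N Γ t := by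
          intro a ha
          rcases (hN'mem a).1 ha.1 with rfl | rfl | rfl | ⟨hm, -, -⟩
          · rw [g_ux]
            exact ⟨huv, ext_sreach_old hpv' hx hux htx ha.2.1, hreach_tv ha.2.2⟩
          · rw [g_wx]
            exact ⟨hwv, ext_sreach_old hpv' hx hwx htx ha.2.1, hreach_tv ha.2.2⟩
          · have h1 : Γ.Reach v t := ext_sreach_from_x hpv' hx htx ha.2.1
            have h2 : Γ.SReach t v :=
              ext_sreach_old hpv' hx htx hvx (sreach_of_reach_ne ha.2.2 htv)
            exact absurd (Relation.TransGen.trans_left h2 h1) (hac t)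
          · rw [g_old a hm]
            have hne := hNmem a hm
            have hmap := ext_reach_map hpv' hx ha.2.2
            rw [if_neg htx, if_neg hne.2] at hmap
            exact ⟨hm, ext_sreach_old hpv' hx hne.1 htx ha.2.1, hmap⟩
        calc (GW N' Γ' t).ncard ≤ (GW N Γ t).ncard :=
              Set.ncard_le_ncard_of_injOn g hmaps hinj (hGWfin t)
          _ ≤ swOf N Γ := Finset.le_sup (f := fun t => (GW N Γ t).ncard) htΓ
  exact ⟨Γ', htree', Finset.sup_le key⟩

end Digr

end AuxProof3

/-- In-splitting does not increase scanwidth. -/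
theorem stmt0 {V : Type} [DecidableEq V] (N N' : Digr V)
    (hN : N.IsNetwork) (hN' : N'.IsNetwork) (h : InSplit N N') :
    N'.scanwidth ≤ N.scanwidth := by
  obtain ⟨⟨hacN, hrootN⟩, -⟩ := hN
  obtain ⟨r, hr, -⟩ := hrootN
  have hne : N.verts.Nonempty := ⟨r, hr.1⟩
  have hSne : {k | ∃ Γ : Digr V, IsTreeExt N Γ ∧ swOf N Γ = k}.Nonempty := by
    obtain ⟨Γ0, hΓ0⟩ := exists_treeExt N hacN hne
    exact ⟨swOf N Γ0, Γ0, hΓ0, rfl⟩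
  obtain ⟨Γ, hΓ, hsw⟩ := Nat.sInf_mem hSne
  obtain ⟨Γ', hΓ', hle⟩ := insplit_treeExt h hΓ
  calc N'.scanwidth ≤ swOf N' Γ' := Nat.sInf_le ⟨Γ', hΓ', rfl⟩
    _ ≤ swOf N Γ := hle
    _ = N.scanwidth := hsw
end

section
/- Let v be a non-root, non-leaf vertex of a canonical tree extension Γ of N with children q₁, q₂ (not necessarily distinct), and let [HW_v(Γ), S, ψ] be a signature. For i ∈ {1,2} let S_i := {(x,y) ∈ S : L(T_y) ⊆ L(Γ_{q_i})}. Then [HW_v(Γ), S, ψ] is valid if and only if S = S₁ ∪ S₂ and [GW_{q_i}(Γ), S_i, ψ|_{S_i}] is a valid signature for each i ∈ {1,2}. -/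
open Digr

/-!
If `[HW_v(Γ), S, ψ]` is valid, the image of a top arc `a ∈ S` starts with the arc
`ψ a ∈ HW_v(Γ)`, whose head lies below a child `c` of `v`; the images of all arcs of the
forest below `a` continue from that head, so they stay below `c` in `Γ`. Hence the leaves
below `a` lie below `c`, i.e. `a ∈ S_c` and `ψ a ∈ GW_c(Γ)`, and the same pseudo-embedding,
restricted to the forest below `S_i`, witnesses validity of `[GW_{q_i}(Γ), S_i, ψ|_{S_i}]`.
Conversely, the images of the forests below `S₁` and `S₂` stay below `q₁` and `q₂`
respectively, so for `q₁ ≠ q₂` they are arc-disjoint and the two pseudo-embeddings glue;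
consecutive arcs of the forest below `S` lie on the same side because in-arcs of `T` are
unique.
-/

namespace Digr

variable {V : Type}

section Lists

lemma reach_of_isChain {D : Digr V} {a : V} {l : List V} (h : (a :: l).IsChain D.Adj) :
    ∀ z ∈ a :: l, D.Reach a z :=
  h.induction _ _ (fun _ _ hxy hax => hax.tail hxy) fun _ => Relation.ReflTransGen.refl

lemma snd_mem_tail_of_mem_arcsOfList {l : List V} {p : V × V} (hp : p ∈ arcsOfList l) :
    p.2 ∈ l.tail :=
  (List.of_mem_zip hp).2

lemma mem_tail_of_getLast?_eq_some {l : List V} (hl : 2 ≤ l.length) {z : V}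
    (hz : l.getLast? = some z) : z ∈ l.tail := by
  match l, hl with
  | _ :: b :: t, _ =>
    rw [List.getLast?_cons_cons] at hz
    exact List.mem_of_getLast? hz

lemma eq_cons_cons_of_firstArc {l : List V} {u w : V} (h : firstArc l = some (u, w)) :
    ∃ t, l = u :: w :: t := by
  match l, h with
  | _ :: _ :: t, h =>
    simp only [firstArc, Option.some.injEq, Prod.mk.injEq] at h
    exact ⟨t, by rw [h.1, h.2]⟩

lemma ead_of_disjoint {l l' : List V} (hl : 2 ≤ l.length) (hl' : 2 ≤ l'.length)
    (h : List.Disjoint (arcsOfList l) (arcsOfList l')) : EAD l l' := by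
  match l, hl with
  | _ :: _ :: _, _ => exact ⟨hl', Or.inl h⟩

end Lists

lemma exists_child_mem_GW_of_mem_HW {D Γ : Digr V} {v : V} {b : V × V} (hb : b ∈ HW D Γ v) :
    ∃ c, (v, c) ∈ Γ.arcs ∧ b ∈ GW D Γ c := by
  obtain ⟨c, hvc, hcb⟩ := Relation.TransGen.head'_iff.mp hb.2.2
  exact ⟨c, hvc, hb.1, Relation.TransGen.tail' hb.2.1 hvc, hcb⟩

section ForestBelow

variable {T : Digr V}

lemma forestBelow_mono {S S' : Set (V × V)} (h : S ⊆ S') :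
    ForestBelow T S ⊆ ForestBelow T S' := by
  rintro e (he | ⟨he, a, ha, hr⟩)
  exacts [.inl (h he), .inr ⟨he, a, h ha, hr⟩]

lemma forestBelow_union (S₁ S₂ : Set (V × V)) :
    ForestBelow T (S₁ ∪ S₂) = ForestBelow T S₁ ∪ ForestBelow T S₂ := by
  ext e
  simp only [ForestBelow, Set.mem_union, Set.mem_setOf_eq]
  grind

lemma mem_forestBelow_iff {S : Set (V × V)} {e : V × V} :
    e ∈ ForestBelow T S ↔ ∃ a ∈ S, e ∈ ForestBelow T {a} := by
  simp only [ForestBelow, Set.mem_union, Set.mem_setOf_eq, Set.mem_singleton_iff]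
  grind

lemma reach_of_mem_forestBelow_singleton {a e : V × V} (he : e ∈ ForestBelow T {a}) :
    T.Reach a.2 e.2 := by
  rcases he with rfl | ⟨he, _, rfl, hr⟩
  exacts [.refl, hr.tail he]

lemma exists_mem_forestBelow_singleton {a : V × V} {x : V} (hx : T.Reach a.2 x) :
    ∃ e ∈ ForestBelow T {a}, e.2 = x := by
  rcases hx.cases_tail with rfl | ⟨m, ham, hmx⟩
  exacts [⟨a, .inl rfl, rfl⟩, ⟨(m, x), .inr ⟨hmx, a, rfl, ham⟩, rfl⟩]

variable {S S' : Set (V × V)} (htop : IsTopArcSet T S) (hS' : S' ⊆ S)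
include htop hS'

lemma mem_of_mem_forestBelow {a : V × V} (ha : a ∈ S) (h : a ∈ ForestBelow T S') :
    a ∈ S' := by
  refine h.resolve_right fun ⟨_, a', ha', hr⟩ => ?_
  rcases hr.cases_tail with hr | ⟨m, ham, hm⟩
  · exact htop.2 a ha a' (.inl (hS' ha')) hr.symm
  · exact htop.2 a ha (m, a.1) (.inr ⟨hm, a', hS' ha', ham⟩) rfl

lemma mem_forestBelow_iff_of_adj
    (hin : ∀ {c x y}, (x, c) ∈ T.arcs → (y, c) ∈ T.arcs → x = y)
    {x y z : V} (hxy : (x, y) ∈ ForestBelow T S) (hyz : (y, z) ∈ ForestBelow T S) :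
    (x, y) ∈ ForestBelow T S' ↔ (y, z) ∈ ForestBelow T S' := by
  have harcs : ForestBelow T S ⊆ T.arcs := by
    rintro e (he | ⟨he, -⟩)
    exacts [htop.1 he, he]
  constructor
  · rintro (h | ⟨hxy', a, ha, hr⟩)
    · exact .inr ⟨harcs hyz, (x, y), h, .refl⟩
    · exact .inr ⟨harcs hyz, a, ha, hr.tail hxy'⟩
  · rintro (h | ⟨-, a, ha, hr⟩)
    · exact absurd rfl (htop.2 _ (hS' h) _ hxy)
    rcases hr.cases_tail with hr | ⟨m, ham, hmy⟩
    · obtain ⟨a1, a2⟩ := a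
      obtain rfl : a2 = y := hr.symm
      obtain rfl : a1 = x := hin (htop.1 (hS' ha)) (harcs hxy)
      exact .inl ha
    · exact .inr ⟨harcs hxy, a, ha, hin hmy (harcs hxy) ▸ ham⟩

end ForestBelow

lemma restrictPsi_of_mem {ψ : V × V → Option (V × V)} {S : Set (V × V)} {a : V × V}
    (ha : a ∈ S) : restrictPsi ψ S a = ψ a :=
  if_pos ha

lemma restrictPsi_of_not_mem {ψ : V × V → Option (V × V)} {S : Set (V × V)} {a : V × V}
    (ha : a ∉ S) : restrictPsi ψ S a = none :=
  if_neg ha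

variable [DecidableEq V]

lemma eq_of_inDeg_le_one (D : Digr V) {c x y : V} (hc : D.inDeg c ≤ 1)
    (hx : (x, c) ∈ D.arcs) (hy : (y, c) ∈ D.arcs) : x = y :=
  congrArg Prod.fst <| Finset.card_le_one.mp hc (x, c) (by simp [hx]) (y, c) (by simp [hy])

lemma not_mem_arcs_of_inDeg_eq_zero (D : Digr V) {c x : V} (h : D.inDeg c = 0) :
    (x, c) ∉ D.arcs := fun hx =>
  Finset.notMem_empty (x, c) <| (Finset.card_eq_zero.mp h).subst (motive := ((x, c) ∈ ·))
    (Finset.mem_filter.mpr ⟨hx, rfl⟩)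

lemma not_mem_arcs_of_outDeg_eq_zero (D : Digr V) {x y : V} (h : D.outDeg x = 0) :
    (x, y) ∉ D.arcs := fun hy =>
  Finset.notMem_empty (x, y) <| (Finset.card_eq_zero.mp h).subst (motive := ((x, y) ∈ ·))
    (Finset.mem_filter.mpr ⟨hy, rfl⟩)

lemma exists_arc_of_outDeg_ne_zero (D : Digr V) {x : V} (h : D.outDeg x ≠ 0) :
    ∃ y, (x, y) ∈ D.arcs := by
  obtain ⟨a, ha⟩ := Finset.card_pos.mp (Nat.pos_of_ne_zero h)
  rw [Finset.mem_filter] at ha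
  exact ⟨a.2, ha.2 ▸ ha.1⟩

lemma exists_reach_leaf (D : Digr V) (hD : D.Acyclic) {x : V} (hx : x ∈ D.verts) :
    ∃ ℓ ∈ D.leaves, D.Reach x ℓ := by
  classical
  let below (z : V) := D.verts.filter (D.Reach z)
  obtain ⟨ℓ, hℓ, hmin⟩ := (below x).exists_min_image (fun z => (below z).card)
    ⟨x, Finset.mem_filter.mpr ⟨hx, .refl⟩⟩
  rw [Finset.mem_filter] at hℓ
  refine ⟨ℓ, ⟨hℓ.1, ?_⟩, hℓ.2⟩
  by_contra hout
  obtain ⟨y, hy⟩ := D.exists_arc_of_outDeg_ne_zero hout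
  -- `below y` misses `ℓ` by acyclicity, so it is strictly smaller than `below ℓ`
  have hlt : (below y).card < (below ℓ).card := by
    refine Finset.card_lt_card ⟨fun z hz => ?_, fun hsub => ?_⟩
    · rw [Finset.mem_filter] at hz ⊢
      exact ⟨hz.1, Relation.ReflTransGen.head hy hz.2⟩
    · have hℓℓ := (Finset.mem_filter.mp (hsub (Finset.mem_filter.mpr ⟨hℓ.1, .refl⟩))).2
      exact hD ℓ (Relation.TransGen.head' hy hℓℓ)
  exact hlt.not_ge (hmin y (Finset.mem_filter.mpr ⟨(D.arc_mem _ hy).2.1, hℓ.2.tail hy⟩))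

lemma AttachRoot.eq_of_arcs {D D' : Digr V} {ρ : V} (h : AttachRoot D ρ D')
    (hD : ∀ v ∈ D.verts, D.inDeg v ≤ 1) {c x y : V}
    (hx : (x, c) ∈ D'.arcs) (hy : (y, c) ∈ D'.arcs) : x = y := by
  obtain ⟨-, -, r, hr, harcs⟩ := h
  rw [harcs, Finset.mem_insert, Prod.mk.injEq] at hx hy
  rcases hx with ⟨rfl, rfl⟩ | hx <;> rcases hy with ⟨rfl, hyc⟩ | hy
  · rfl
  · exact absurd hy (D.not_mem_arcs_of_inDeg_eq_zero hr.2)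
  · exact absurd hx (D.not_mem_arcs_of_inDeg_eq_zero (hyc ▸ hr.2))
  · exact D.eq_of_inDeg_le_one (hD c (D.arc_mem _ hx).2.1) hx hy

lemma AttachRoot.acyclic {D D' : Digr V} {ρ : V} (h : AttachRoot D ρ D') (hD : D.Acyclic) :
    D'.Acyclic := by
  obtain ⟨hρ, -, r, hr, harcs⟩ := h
  have hadj : ∀ {a b}, D'.Adj a b → b ≠ ρ ∧ (a = ρ ∨ D.Adj a b) := by
    intro a b hab
    rw [Adj, harcs, Finset.mem_insert, Prod.mk.injEq] at hab
    rcases hab with ⟨rfl, rfl⟩ | hab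
    · exact ⟨fun hb => hρ (hb ▸ hr.1), Or.inl rfl⟩
    · exact ⟨fun hb => hρ (hb ▸ (D.arc_mem _ hab).2.1), Or.inr hab⟩
  have key : ∀ {a b}, D'.SReach a b → b ≠ ρ ∧ (a = ρ ∨ D.SReach a b) := by
    intro a b hab
    induction hab with
    | single h => exact ⟨(hadj h).1, (hadj h).2.imp_right .single⟩
    | tail _ hmb ih =>
      refine ⟨(hadj hmb).1, ih.2.imp_right fun ham => ham.tail ?_⟩
      exact (hadj hmb).2.resolve_left ih.1
  intro x hx
  exact hD x ((key hx).2.resolve_left (key hx).1)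

lemma IsTreeExt.reach {N Γ : Digr V} (hext : IsTreeExt N Γ) {a b : V} (h : N.Reach a b) :
    Γ.Reach a b := by
  induction h with
  | refl => exact .refl
  | tail _ hmb ih => exact ih.trans (hext.2.2 _ hmb).to_reflTransGen

lemma Canonical.mem_leaves {N Γ : Digr V} (hΓ : Canonical N Γ) {ℓ : V} (h : ℓ ∈ N.leaves) :
    ℓ ∈ Γ.leaves := by
  obtain ⟨hext, hconn⟩ := hΓ
  have hℓ : ℓ ∈ Γ.verts := hext.2.1 ▸ h.1
  refine ⟨hℓ, by_contra fun hout => ?_⟩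
  obtain ⟨c, hc⟩ := Γ.exists_arc_of_outDeg_ne_zero hout
  -- `Γ_ℓ` is weakly connected in `N`, so an `N`-arc joins `ℓ` to some `z` below it in `Γ`:
  -- an out-arc contradicts that `ℓ` is a leaf, an in-arc closes a cycle in `Γ`
  rcases (hconn ℓ hℓ ℓ .refl c (.single hc)).cases_head with
    heq | ⟨z, ⟨-, hz, hℓz | hzℓ⟩, -⟩
  · exact (Γ.arc_mem _ hc).2.2 heq
  · exact N.not_mem_arcs_of_outDeg_eq_zero h.2 hℓz
  · exact hext.1.1.1 ℓ (Relation.TransGen.trans_right hz (hext.2.2 _ hzℓ))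

section OutTree

variable {Γ : Digr V} (hΓ : Γ.IsOutTree)
include hΓ

lemma IsOutTree.eq_of_arcs {c x y : V} (hx : (x, c) ∈ Γ.arcs) (hy : (y, c) ∈ Γ.arcs) :
    x = y :=
  Γ.eq_of_inDeg_le_one (hΓ.2 c (Γ.arc_mem _ hx).2.1) hx hy

lemma IsOutTree.reach_total {a b c : V} (hac : Γ.Reach a c) (hbc : Γ.Reach b c) :
    Γ.Reach a b ∨ Γ.Reach b a := by
  induction hbc generalizing a with
  | refl => exact .inl hac
  | tail hbm hmc ih =>
    rcases hac.cases_tail with rfl | ⟨m', ham', hm'c⟩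
    · exact .inr (hbm.tail hmc)
    · exact ih (hΓ.eq_of_arcs hm'c hmc ▸ ham')

lemma IsOutTree.reach_of_sReach_child {v q u : V} (hvq : (v, q) ∈ Γ.arcs)
    (h : Γ.SReach u q) : Γ.Reach u v := by
  obtain ⟨m, hum, hmq⟩ := Relation.TransGen.tail'_iff.mp h
  exact hΓ.eq_of_arcs hmq hvq ▸ hum

lemma IsOutTree.eq_of_reach_of_reach {v c q x : V} (hvc : (v, c) ∈ Γ.arcs)
    (hvq : (v, q) ∈ Γ.arcs) (hc : Γ.Reach c x) (hq : Γ.Reach q x) : c = q := by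
  -- a child lying below another child of `v` would lie below `v` itself
  have key : ∀ {a b}, (v, a) ∈ Γ.arcs → (v, b) ∈ Γ.arcs → Γ.Reach a b → b = a := by
    intro a b ha hb hab
    refine (Relation.reflTransGen_iff_eq_or_transGen.mp hab).resolve_right fun hab => ?_
    exact hΓ.1.1 v (Relation.TransGen.head' ha (hΓ.reach_of_sReach_child hb hab))
  rcases hΓ.reach_total hc hq with h | h
  exacts [(key hvc hvq h).symm, key hvq hvc h]

lemma mem_HW_of_mem_GW {D : Digr V} {v q : V} (hvq : (v, q) ∈ Γ.arcs) {b : V × V}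
    (hb : b ∈ GW D Γ q) : b ∈ HW D Γ v :=
  ⟨hb.1, hΓ.reach_of_sReach_child hvq hb.2.1, Relation.TransGen.head' hvq hb.2.2⟩

end OutTree

lemma mem_forestLeaves_iff {T : Digr V} {S : Set (V × V)} {ℓ : V} :
    ℓ ∈ forestLeaves T S ↔ ℓ ∈ T.leaves ∧ ∃ a ∈ S, T.Reach a.2 ℓ := by
  refine and_congr_right fun _ => ⟨?_, ?_⟩
  · rintro ⟨e, he, rfl⟩
    obtain ⟨a, ha, he⟩ := mem_forestBelow_iff.mp he
    exact ⟨a, ha, reach_of_mem_forestBelow_singleton he⟩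
  · rintro ⟨a, ha, hr⟩
    obtain ⟨e, he, rfl⟩ := exists_mem_forestBelow_singleton hr
    exact ⟨e, forestBelow_mono (Set.singleton_subset_iff.mpr ha) he, rfl⟩

section SPE

variable {N T : Digr V} {φ : V × V → List V}

lemma IsSPE.mono {F F' : Set (V × V)} (hφ : IsSPE N T F φ) (h : F' ⊆ F) : IsSPE N T F' φ :=
  ⟨fun a ha => hφ.path a (h ha), fun x y z h₁ h₂ => hφ.spe1 x y z (h h₁) (h h₂),
    fun x y x' y' h₁ h₂ => hφ.spe2 x y x' y' (h h₁) (h h₂),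
    fun x y y' h₁ h₂ => hφ.spe3 x y y' (h h₁) (h h₂),
    fun x ℓ h₁ => hφ.spe4 x ℓ (h h₁)⟩

lemma IsSPE.reach_tail_of_arc {F : Set (V × V)} (hφ : IsSPE N T F φ) {m x y w : V}
    (hmx : (m, x) ∈ F) (hxy : (x, y) ∈ F) (hw : ∀ z ∈ (φ (m, x)).tail, N.Reach w z) :
    ∀ z ∈ (φ (x, y)).tail, N.Reach w z := by
  obtain ⟨⟨hne, -, -, hchain⟩, -⟩ := hφ.path _ hxy
  obtain ⟨h, t, ht⟩ := List.exists_cons_of_ne_nil hne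
  have hwh : N.Reach w h := by
    have hlast := hφ.spe1 m x y hmx hxy
    rw [ht, List.head?_cons] at hlast
    exact hw h (mem_tail_of_getLast?_eq_some (hφ.path _ hmx).2 hlast)
  intro z hz
  rw [ht] at hchain hz
  exact hwh.trans (reach_of_isChain hchain z (List.mem_cons_of_mem _ hz))

lemma IsSPE.reach_tail_of_reach {F : Set (V × V)} (hφ : IsSPE N T F φ) {a : V × V} {w : V}
    (hF : ∀ x y, T.Reach a.2 x → (x, y) ∈ T.arcs → (x, y) ∈ F) (ha : a ∈ F)
    (hw : ∀ z ∈ (φ a).tail, N.Reach w z) {x y : V} (hx : T.Reach a.2 x)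
    (hxy : (x, y) ∈ T.arcs) : ∀ z ∈ (φ (x, y)).tail, N.Reach w z := by
  induction hx generalizing y with
  | refl => exact hφ.reach_tail_of_arc ha (hF _ _ .refl hxy) hw
  | tail hm hmx ih =>
    exact hφ.reach_tail_of_arc (hF _ _ hm hmx) (hF _ _ (hm.tail hmx) hxy) (ih hmx)

variable {S : Set (V × V)}

lemma IsSPE.reach_tail (hφ : IsSPE N T (ForestBelow T S) φ) {a : V × V} {u w : V}
    (ha : a ∈ S) (hfa : firstArc (φ a) = some (u, w)) {e : V × V}
    (he : e ∈ ForestBelow T {a}) : ∀ z ∈ (φ e).tail, N.Reach w z := by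
  have hw : ∀ z ∈ (φ a).tail, N.Reach w z := by
    obtain ⟨t, ht⟩ := eq_cons_cons_of_firstArc hfa
    have hchain := (hφ.path a (.inl ha)).1.2.2.2
    rw [ht] at hchain ⊢
    exact reach_of_isChain hchain.tail
  rcases he with rfl | ⟨he, a', ha', hr⟩
  · exact hw
  · rw [Set.mem_singleton_iff] at ha'
    subst ha'
    exact hφ.reach_tail_of_reach (fun x y hx hxy => .inr ⟨hxy, a', ha, hx⟩) (.inl ha) hw hr he

lemma IsSPE.reach_leaf (hφ : IsSPE N T (ForestBelow T S) φ) {a : V × V} {u w : V}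
    (ha : a ∈ S) (hfa : firstArc (φ a) = some (u, w)) {ℓ : V} (hℓ : ℓ ∈ T.leaves)
    (hr : T.Reach a.2 ℓ) : N.Reach w ℓ := by
  obtain ⟨e, he, rfl⟩ := exists_mem_forestBelow_singleton hr
  have heS : e ∈ ForestBelow T S := forestBelow_mono (Set.singleton_subset_iff.mpr ha) he
  exact hφ.reach_tail ha hfa he _
    (mem_tail_of_getLast?_eq_some (hφ.path e heS).2 (hφ.spe4 e.1 e.2 heS hℓ))

open Classical in
lemma IsSPE.piecewise {F₁ F₂ : Set (V × V)} {φ₁ φ₂ : V × V → List V}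
    (h₁ : IsSPE N T F₁ φ₁) (h₂ : IsSPE N T F₂ φ₂)
    (hdisj : ∀ e₁ ∈ F₁, ∀ e₂ ∈ F₂,
      List.Disjoint (arcsOfList (φ₁ e₁)) (arcsOfList (φ₂ e₂)))
    (hadj : ∀ x y z, (x, y) ∈ F₁ ∪ F₂ → (y, z) ∈ F₁ ∪ F₂ →
      ((x, y) ∈ F₁ ↔ (y, z) ∈ F₁)) :
    IsSPE N T (F₁ ∪ F₂) (F₁.piecewise φ₁ φ₂) := by
  have hpw₁ {e} (h : e ∈ F₁) : F₁.piecewise φ₁ φ₂ e = φ₁ e :=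
    Set.piecewise_eq_of_mem _ _ _ h
  have hpw₂ {e} (h : e ∉ F₁) : F₁.piecewise φ₁ φ₂ e = φ₂ e :=
    Set.piecewise_eq_of_notMem _ _ _ h
  have hmem₂ {e} (he : e ∈ F₁ ∪ F₂) (h : e ∉ F₁) : e ∈ F₂ := he.resolve_left h
  have hpath {e} (he : e ∈ F₁ ∪ F₂) : 2 ≤ (F₁.piecewise φ₁ φ₂ e).length := by
    by_cases h : e ∈ F₁
    exacts [hpw₁ h ▸ (h₁.path e h).2, hpw₂ h ▸ (h₂.path e (hmem₂ he h)).2]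
  have hmixed {e e'} (he : e ∈ F₁) (he' : e' ∈ F₁ ∪ F₂) (h : e' ∉ F₁) :
      List.Disjoint (arcsOfList (F₁.piecewise φ₁ φ₂ e))
        (arcsOfList (F₁.piecewise φ₁ φ₂ e')) :=
    hpw₁ he ▸ hpw₂ h ▸ hdisj e he e' (hmem₂ he' h)
  refine ⟨fun e he => ?_, fun x y z hxy hyz => ?_, fun x y x' y' he he' hne => ?_,
    fun x y y' he he' hne => ?_, fun x ℓ he hℓ => ?_⟩
  · by_cases h : e ∈ F₁
    exacts [hpw₁ h ▸ h₁.path e h, hpw₂ h ▸ h₂.path e (hmem₂ he h)]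
  · by_cases h : (x, y) ∈ F₁
    · have h' := (hadj x y z hxy hyz).mp h
      rw [hpw₁ h, hpw₁ h']
      exact h₁.spe1 x y z h h'
    · have h' := mt (hadj x y z hxy hyz).mpr h
      rw [hpw₂ h, hpw₂ h']
      exact h₂.spe1 x y z (hmem₂ hxy h) (hmem₂ hyz h')
  · by_cases h : (x, y) ∈ F₁ <;> by_cases h' : (x', y') ∈ F₁
    · rw [hpw₁ h, hpw₁ h']; exact h₁.spe2 x y x' y' h h' hne
    · exact hmixed h he' h'
    · exact (hmixed h' he h).symm
    · rw [hpw₂ h, hpw₂ h']; exact h₂.spe2 x y x' y' (hmem₂ he h) (hmem₂ he' h') hne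
  · by_cases h : (x, y) ∈ F₁ <;> by_cases h' : (x, y') ∈ F₁
    · rw [hpw₁ h, hpw₁ h']; exact h₁.spe3 x y y' h h' hne
    · exact ead_of_disjoint (hpath he) (hpath he') (hmixed h he' h')
    · exact ead_of_disjoint (hpath he) (hpath he') (hmixed h' he h).symm
    · rw [hpw₂ h, hpw₂ h']; exact h₂.spe3 x y y' (hmem₂ he h) (hmem₂ he' h') hne
  · by_cases h : (x, ℓ) ∈ F₁
    exacts [hpw₁ h ▸ h₁.spe4 x ℓ h hℓ, hpw₂ h ▸ h₂.spe4 x ℓ (hmem₂ he h) hℓ]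

end SPE

/-- The set `S_i` of the paper, for the child `q = q_i`. -/
def partBelow (T Γ : Digr V) (S : Set (V × V)) (q : V) : Set (V × V) :=
  {a | a ∈ S ∧
    {ℓ | ℓ ∈ T.leaves ∧ T.Reach a.2 ℓ} ⊆ {ℓ | ℓ ∈ Γ.leaves ∧ Γ.Reach q ℓ}}

section Signature

variable {N T Γ : Digr V} {B S : Set (V × V)} {ψ : V × V → Option (V × V)}

lemma IsSig.mem_leaves (hsig : IsSig N T B S ψ) {a : V × V} (ha : a ∈ S) {ℓ : V}
    (hℓ : ℓ ∈ T.leaves) (hr : T.Reach a.2 ℓ) : ℓ ∈ N.leaves := by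
  have hℓS : ℓ ∈ forestLeaves T S := mem_forestLeaves_iff.mpr ⟨hℓ, a, ha, hr⟩
  rw [hsig.2.2.1] at hℓS
  exact hℓS.1

lemma ValidSig.of_restrictPsi {B' : Set (V × V)} (hsig : IsSig N T B S ψ)
    (h : ValidSig N T B' S (restrictPsi ψ S)) : ValidSig N T B S ψ :=
  ⟨hsig, h.2.imp fun _ hφ =>
    ⟨hφ.1, fun a ha => (hφ.2 a ha).trans (restrictPsi_of_mem ha)⟩⟩

section Forward

variable {φ : V × V → List V} (hφ : IsSPE N T (ForestBelow T S) φ)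
  (hfirst : ∀ a ∈ S, firstArc (φ a) = ψ a)
include hφ hfirst

lemma mem_partBelow_of_psi_eq (hΓ : Canonical N Γ) (hsig : IsSig N T B S ψ) {a : V × V}
    (ha : a ∈ S) {u w q : V} (hψ : ψ a = some (u, w)) (hq : Γ.Reach q w) :
    a ∈ partBelow T Γ S q := by
  refine ⟨ha, fun ℓ ⟨hℓ, hr⟩ => ⟨hΓ.mem_leaves (hsig.mem_leaves ha hℓ hr), ?_⟩⟩
  exact hq.trans (hΓ.1.reach (hφ.reach_leaf ha ((hfirst a ha).trans hψ) hℓ hr))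

variable (hΓ : Canonical N Γ) {v : V} (hsig : IsSig N T (HW N Γ v) S ψ)
include hΓ hsig

lemma exists_child_mem_partBelow {a : V × V} (ha : a ∈ S) :
    ∃ c, (v, c) ∈ Γ.arcs ∧ a ∈ partBelow T Γ S c ∧
      ∃ b ∈ GW N Γ c, ψ a = some b := by
  obtain ⟨⟨u, w⟩, hb, hψ⟩ := hsig.2.2.2.1 a ha
  obtain ⟨c, hvc, hbc⟩ := exists_child_mem_GW_of_mem_HW hb
  exact ⟨c, hvc, mem_partBelow_of_psi_eq hφ hfirst hΓ hsig ha hψ hbc.2.2, _, hbc, hψ⟩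

lemma psi_mem_GW_of_mem_partBelow (hT : T.Acyclic) {q : V} (hvq : (v, q) ∈ Γ.arcs)
    {a : V × V} (ha : a ∈ partBelow T Γ S q) : ∃ b ∈ GW N Γ q, ψ a = some b := by
  obtain ⟨c, hvc, hac, hψ⟩ := exists_child_mem_partBelow hφ hfirst hΓ hsig ha.1
  -- a leaf of `T` below `a` lies below both children `c` and `q`
  obtain ⟨ℓ, hℓ, hr⟩ := T.exists_reach_leaf hT (T.arc_mem _ (hsig.2.1.1 ha.1)).2.1
  obtain rfl :=
    hΓ.1.1.eq_of_reach_of_reach hvc hvq (hac.2 ⟨hℓ, hr⟩).2 (ha.2 ⟨hℓ, hr⟩).2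
  exact hψ

end Forward

theorem ValidSig.eq_union_partBelow (hΓ : Canonical N Γ) {v q₁ q₂ : V}
    (hval : ValidSig N T (HW N Γ v) S ψ)
    (hchild : ∀ c, (v, c) ∈ Γ.arcs → c = q₁ ∨ c = q₂) :
    S = partBelow T Γ S q₁ ∪ partBelow T Γ S q₂ := by
  obtain ⟨hsig, φ, hφ, hfirst⟩ := hval
  refine subset_antisymm (fun a ha => ?_) (Set.union_subset (fun _ ha => ha.1) fun _ ha => ha.1)
  obtain ⟨c, hvc, hac, -⟩ := exists_child_mem_partBelow hφ hfirst hΓ hsig ha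
  rcases hchild c hvc with rfl | rfl
  exacts [.inl hac, .inr hac]

theorem ValidSig.validSig_partBelow (hΓ : Canonical N Γ) (hT : T.Acyclic) {v q : V}
    (hval : ValidSig N T (HW N Γ v) S ψ) (hvq : (v, q) ∈ Γ.arcs) :
    ValidSig N T (GW N Γ q) (partBelow T Γ S q) (restrictPsi ψ (partBelow T Γ S q)) := by
  obtain ⟨hsig, φ, hφ, hfirst⟩ := hval
  have hsub : partBelow T Γ S q ⊆ S := fun a ha => ha.1
  refine ⟨⟨fun b hb => hb.1, ⟨hsub.trans hsig.2.1.1, fun a ha b hb =>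
      hsig.2.1.2 a ha.1 b (forestBelow_mono hsub hb)⟩, ?_, fun a ha => ?_,
      fun a ha => restrictPsi_of_not_mem ha⟩,
    φ, hφ.mono (forestBelow_mono hsub),
    fun a ha => (hfirst a ha.1).trans (restrictPsi_of_mem ha).symm⟩
  · ext ℓ
    rw [mem_forestLeaves_iff]
    constructor
    · rintro ⟨hℓ, a, ha, hr⟩
      obtain ⟨⟨u, w⟩, hb, hψ⟩ := psi_mem_GW_of_mem_partBelow hφ hfirst hΓ hsig hT hvq ha
      exact ⟨hsig.mem_leaves ha.1 hℓ hr, _, hb,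
        hφ.reach_leaf ha.1 ((hfirst a ha.1).trans hψ) hℓ hr⟩
    · rintro ⟨hℓN, b, hb, hbℓ⟩
      have hℓS : ℓ ∈ forestLeaves T S := by
        rw [hsig.2.2.1]
        exact ⟨hℓN, b, mem_HW_of_mem_GW hΓ.1.1 hvq hb, hbℓ⟩
      obtain ⟨hℓ, a, ha, hr⟩ := mem_forestLeaves_iff.mp hℓS
      obtain ⟨c, hvc, hac, -⟩ := exists_child_mem_partBelow hφ hfirst hΓ hsig ha
      obtain rfl := hΓ.1.1.eq_of_reach_of_reach hvc hvq (hac.2 ⟨hℓ, hr⟩).2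
        (hb.2.2.trans (hΓ.1.reach hbℓ))
      exact ⟨hℓ, a, hac, hr⟩
  · obtain ⟨b, hb, hψ⟩ := psi_mem_GW_of_mem_partBelow hφ hfirst hΓ hsig hT hvq ha
    exact ⟨b, hb, (restrictPsi_of_mem ha).trans hψ⟩

lemma IsSPE.reach_of_mem_arcsOfList {φ : V × V → List V}
    (hφ : IsSPE N T (ForestBelow T S) φ) (hfirst : ∀ a ∈ S, firstArc (φ a) = ψ a)
    (hext : IsTreeExt N Γ) {q : V} (hsig : IsSig N T (GW N Γ q) S ψ) {e : V × V}
    (he : e ∈ ForestBelow T S) {p : V × V} (hp : p ∈ arcsOfList (φ e)) : Γ.Reach q p.2 := by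
  obtain ⟨a, ha, hea⟩ := mem_forestBelow_iff.mp he
  obtain ⟨⟨u, w⟩, hb, hψ⟩ := hsig.2.2.2.1 a ha
  exact hb.2.2.trans (hext.reach (hφ.reach_tail ha ((hfirst a ha).trans hψ) hea _
    (snd_mem_tail_of_mem_arcsOfList hp)))

theorem ValidSig.of_union {S₁ S₂ : Set (V × V)} {q₁ q₂ : V} (hext : IsTreeExt N Γ)
    (hTin : ∀ {c x y}, (x, c) ∈ T.arcs → (y, c) ∈ T.arcs → x = y)
    (hsig : IsSig N T B S ψ) (hS : S = S₁ ∪ S₂)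
    (h₁ : ValidSig N T (GW N Γ q₁) S₁ (restrictPsi ψ S₁))
    (h₂ : ValidSig N T (GW N Γ q₂) S₂ (restrictPsi ψ S₂))
    (hq : ∀ x, Γ.Reach q₁ x → Γ.Reach q₂ x → False) : ValidSig N T B S ψ := by
  classical
  obtain ⟨hsig₁, φ₁, hφ₁, hfirst₁⟩ := h₁
  obtain ⟨hsig₂, φ₂, hφ₂, hfirst₂⟩ := h₂
  have hS₁ : S₁ ⊆ S := hS ▸ Set.subset_union_left
  have hF : ForestBelow T S = ForestBelow T S₁ ∪ ForestBelow T S₂ :=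
    hS ▸ forestBelow_union S₁ S₂
  refine ⟨hsig, (ForestBelow T S₁).piecewise φ₁ φ₂, hF ▸ hφ₁.piecewise hφ₂ ?_ ?_,
    fun a ha => ?_⟩
  · intro e₁ he₁ e₂ he₂ p hp₁ hp₂
    exact hq _ (hφ₁.reach_of_mem_arcsOfList hfirst₁ hext hsig₁ he₁ hp₁)
      (hφ₂.reach_of_mem_arcsOfList hfirst₂ hext hsig₂ he₂ hp₂)
  · intro x y z hxy hyz
    rw [← hF] at hxy hyz
    exact mem_forestBelow_iff_of_adj hsig.2.1 hS₁ hTin hxy hyz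
  · by_cases h : a ∈ ForestBelow T S₁
    · have ha₁ := mem_of_mem_forestBelow hsig.2.1 hS₁ ha h
      rw [Set.piecewise_eq_of_mem _ _ _ h, hfirst₁ a ha₁, restrictPsi_of_mem ha₁]
    · have ha₂ : a ∈ S₂ :=
        (hS ▸ ha : a ∈ S₁ ∪ S₂).resolve_left fun h₁ => h (.inl h₁)
      rw [Set.piecewise_eq_of_notMem _ _ _ h, hfirst₂ a ha₂, restrictPsi_of_mem ha₂]

end Signature

end Digr

theorem stmt5_general {V : Type} [DecidableEq V] (Ns Ts N T Γ : Digr V) (ρN ρT : V)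
    (hsetup : PaperSetup Ns Ts N T ρN ρT) (hΓ : Canonical N Γ)
    (v q1 q2 : V)
    (hch : {x | (v, x) ∈ Γ.arcs} = ({q1, q2} : Set V))
    (S : Set (V × V)) (ψ : V × V → Option (V × V))
    (hsig : IsSig N T (HW N Γ v) S ψ)
    (S1 S2 : Set (V × V))
    (hS1 : S1 = {a | a ∈ S ∧
      {ℓ | ℓ ∈ T.leaves ∧ T.Reach a.2 ℓ} ⊆ {ℓ | ℓ ∈ Γ.leaves ∧ Γ.Reach q1 ℓ}})
    (hS2 : S2 = {a | a ∈ S ∧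
      {ℓ | ℓ ∈ T.leaves ∧ T.Reach a.2 ℓ} ⊆ {ℓ | ℓ ∈ Γ.leaves ∧ Γ.Reach q2 ℓ}}) :
    ValidSig N T (HW N Γ v) S ψ ↔
      (S = S1 ∪ S2 ∧ ValidSig N T (GW N Γ q1) S1 (restrictPsi ψ S1) ∧
        ValidSig N T (GW N Γ q2) S2 (restrictPsi ψ S2)) := by
  obtain ⟨-, -, hTs, -, -, hTroot⟩ := hsetup
  have hT : T.Acyclic := hTroot.acyclic hTs.1.1.1
  have hchild (c : V) : (v, c) ∈ Γ.arcs ↔ c = q1 ∨ c = q2 := Set.ext_iff.mp hch c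
  have hq1 : (v, q1) ∈ Γ.arcs := (hchild q1).mpr (.inl rfl)
  have hq2 : (v, q2) ∈ Γ.arcs := (hchild q2).mpr (.inr rfl)
  subst hS1 hS2
  constructor
  · intro hval
    exact ⟨hval.eq_union_partBelow hΓ fun c => (hchild c).mp, hval.validSig_partBelow hΓ hT hq1,
      hval.validSig_partBelow hΓ hT hq2⟩
  · rintro ⟨hSU, h1, h2⟩
    rcases eq_or_ne q1 q2 with rfl | hne
    · rw [Set.union_self] at hSU
      rw [← hSU] at h1
      exact h1.of_restrictPsi hsig
    · exact h1.of_union hΓ.1 (hTroot.eq_of_arcs hTs.2) hsig hSU h2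
        fun x hx1 hx2 => hne (hΓ.1.1.eq_of_reach_of_reach hq1 hq2 hx1 hx2)

/-- `[HW_v(Γ), S, ψ]` is valid iff `S = S₁ ∪ S₂` and the
restrictions to the children `q₁, q₂` are valid. -/
theorem stmt5 {V : Type} [DecidableEq V] (Ns Ts N T Γ : Digr V) (ρN ρT : V)
    (hsetup : PaperSetup Ns Ts N T ρN ρT) (hΓ : Canonical N Γ)
    (v q1 q2 : V) (hv : v ∈ Γ.verts) (hnr : ¬ Γ.IsRoot v) (hnl : v ∉ Γ.leaves)
    (hch : {x | (v, x) ∈ Γ.arcs} = ({q1, q2} : Set V))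
    (S : Set (V × V)) (ψ : V × V → Option (V × V))
    (hsig : IsSig N T (HW N Γ v) S ψ)
    (S1 S2 : Set (V × V))
    (hS1 : S1 = {a | a ∈ S ∧
      {ℓ | ℓ ∈ T.leaves ∧ T.Reach a.2 ℓ} ⊆ {ℓ | ℓ ∈ Γ.leaves ∧ Γ.Reach q1 ℓ}})
    (hS2 : S2 = {a | a ∈ S ∧
      {ℓ | ℓ ∈ T.leaves ∧ T.Reach a.2 ℓ} ⊆ {ℓ | ℓ ∈ Γ.leaves ∧ Γ.Reach q2 ℓ}}) :
    ValidSig N T (HW N Γ v) S ψ ↔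
      (S = S1 ∪ S2 ∧ ValidSig N T (GW N Γ q1) S1 (restrictPsi ψ S1) ∧
        ValidSig N T (GW N Γ q2) S2 (restrictPsi ψ S2)) :=
  stmt5_general Ns Ts N T Γ ρN ρT hsetup hΓ v q1 q2 hch S ψ hsig S1 S2 hS1 hS2
end

section
/- Let N be a network with maximum out-degree 2, let N' be any binary in-resolution of N, and let T be any tree. Then N firmly displays T if and only if N' firmly displays T; likewise N softly displays T if and only if N' softly displays T. -/
open Digr

set_option linter.unusedSectionVars false
namespace S9
variable {V : Type} [DecidableEq V]

def InD1 (D : Digr V) : Prop := ∀ p q r, (p,r) ∈ D.arcs → (q,r) ∈ D.arcs → p = q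
def NoV11 (D : Digr V) : Prop := ∀ p r q, (p,r) ∈ D.arcs → (r,q) ∈ D.arcs →
  ∃ q', (r,q') ∈ D.arcs ∧ q' ≠ q
def RootBig (D : Digr V) : Prop := ∀ b ∈ D.verts, (∀ p, (p,b) ∉ D.arcs) →
  ∃ c c', (b,c) ∈ D.arcs ∧ (b,c') ∈ D.arcs ∧ c ≠ c'
def OutLE2 (D : Digr V) : Prop := ∀ y a b c, (y,a) ∈ D.arcs → (y,b) ∈ D.arcs →
  (y,c) ∈ D.arcs → a = b ∨ a = c ∨ b = c

lemma outDeg_eq_zero_iff (D : Digr V) (ℓ : V) : D.outDeg ℓ = 0 ↔ ∀ c, (ℓ, c) ∉ D.arcs := by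
  rw [Digr.outDeg, Finset.card_eq_zero, Finset.filter_eq_empty_iff]
  constructor
  · intro h c hc; exact h hc rfl
  · rintro h ⟨a,b⟩ hab rfl; exact h b hab

lemma inDeg_eq_zero_iff (D : Digr V) (ℓ : V) : D.inDeg ℓ = 0 ↔ ∀ c, (c, ℓ) ∉ D.arcs := by
  rw [Digr.inDeg, Finset.card_eq_zero, Finset.filter_eq_empty_iff]
  constructor
  · intro h c hc; exact h hc rfl
  · rintro h ⟨a,b⟩ hab rfl; exact h a hab

lemma not_leaf_of_arc (D : Digr V) {ℓ c : V} (h : (ℓ,c) ∈ D.arcs) : ℓ ∉ D.leaves :=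
  fun hl => (outDeg_eq_zero_iff D ℓ).1 hl.2 c h

lemma three_distinct {s : Finset (V × V)} (h : 3 ≤ s.card) :
    ∃ a ∈ s, ∃ b ∈ s, ∃ c ∈ s, a ≠ b ∧ a ≠ c ∧ b ≠ c := by
  obtain ⟨a, ha, b, hb, hab⟩ := Finset.one_lt_card.1 (show 1 < s.card by omega)
  have h2 : 0 < ((s.erase a).erase b).card := by
    have hbe : b ∈ s.erase a := Finset.mem_erase.2 ⟨Ne.symm hab, hb⟩
    rw [Finset.card_erase_of_mem hbe, Finset.card_erase_of_mem ha]
    omega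
  obtain ⟨c, hc⟩ := Finset.card_pos.1 h2
  obtain ⟨hcb, hca, hcs⟩ : c ≠ b ∧ c ≠ a ∧ c ∈ s := by
    rcases Finset.mem_erase.1 hc with ⟨h1, h2'⟩
    rcases Finset.mem_erase.1 h2' with ⟨h3, h4⟩
    exact ⟨h1, h3, h4⟩
  exact ⟨a, ha, b, hb, c, hcs, hab, Ne.symm hca, Ne.symm hcb⟩

lemma outDeg_le_two_of_outLE2 (D : Digr V) (h : OutLE2 D) (v : V) : D.outDeg v ≤ 2 := by
  by_contra h3
  unfold Digr.outDeg at h3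
  obtain ⟨a, ha, b, hb, c, hc, hab, hac, hbc⟩ :=
    three_distinct (s := D.arcs.filter fun z => z.1 = v) (by omega)
  obtain ⟨ha1, ha2⟩ := Finset.mem_filter.1 ha
  obtain ⟨hb1, hb2⟩ := Finset.mem_filter.1 hb
  obtain ⟨hc1, hc2⟩ := Finset.mem_filter.1 hc
  obtain ⟨a1,a2⟩ := a; obtain ⟨b1,b2⟩ := b; obtain ⟨c1,c2⟩ := c
  simp only at ha2 hb2 hc2
  rw [ha2] at ha1 hab hac
  rw [hb2] at hb1 hab hbc
  rw [hc2] at hc1 hac hbc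
  rcases h v a2 b2 c2 ha1 hb1 hc1 with h' | h' | h' <;> simp [h'] at hab hac hbc

lemma outLE2_of_deg_le (D : Digr V) (h : ∀ v ∈ D.verts, D.outDeg v ≤ 2) : OutLE2 D := by
  intro y a b c ha hb hc
  by_contra hcon
  push_neg at hcon
  obtain ⟨hab, hac, hbc⟩ := hcon
  have hy : y ∈ D.verts := (D.arc_mem _ ha).1
  have hsub : ({(y,a),(y,b),(y,c)} : Finset (V × V)) ⊆ D.arcs.filter fun z => z.1 = y := by
    intro z hz
    simp only [Finset.mem_insert, Finset.mem_singleton] at hz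
    rcases hz with rfl | rfl | rfl <;> exact Finset.mem_filter.2 ⟨by assumption, rfl⟩
  have hcard : ({(y,a),(y,b),(y,c)} : Finset (V × V)).card = 3 := by
    rw [Finset.card_insert_of_notMem (by simp [hab, hac]),
        Finset.card_insert_of_notMem (by simp [hbc]), Finset.card_singleton]
  have h1 := Finset.card_le_card hsub
  rw [hcard] at h1
  have h2 := h y hy
  rw [Digr.outDeg] at h2
  omega

lemma inDeg_le_one_of_InD1 (D : Digr V) (h : InD1 D) (v : V) : D.inDeg v ≤ 1 := by
  rw [Digr.inDeg, Finset.card_le_one]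
  rintro ⟨a1,a2⟩ ha ⟨b1,b2⟩ hb
  obtain ⟨ha1, ha2⟩ := Finset.mem_filter.1 ha
  obtain ⟨hb1, hb2⟩ := Finset.mem_filter.1 hb
  simp only at ha2 hb2
  have h12 : a1 = b1 := h a1 b1 v (by rwa [ha2] at ha1) (by rwa [hb2] at hb1)
  simp [h12, ha2, hb2]

lemma exists_out_ne (D : Digr V) {r : V} (q : V) (h : 1 < D.outDeg r) :
    ∃ q', (r, q') ∈ D.arcs ∧ q' ≠ q := by
  obtain ⟨b, hb, hbq⟩ := Finset.exists_mem_ne h (r, q)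
  obtain ⟨hb1, hb2⟩ := Finset.mem_filter.1 hb
  obtain ⟨b1, b2⟩ := b
  simp only at hb2; subst hb2
  exact ⟨b2, hb1, fun hq => hbq (by rw [hq])⟩

lemma exists_third_out {D : Digr V} {v : V} (u w : V) (h3 : 3 ≤ D.outDeg v) :
    ∃ c, (v,c) ∈ D.arcs ∧ c ≠ u ∧ c ≠ w := by
  unfold Digr.outDeg at h3
  obtain ⟨a, ha, b, hb, c, hc, hab, hac, hbc⟩ :=
    three_distinct (s := D.arcs.filter fun z => z.1 = v) h3
  obtain ⟨ha1, ha2⟩ := Finset.mem_filter.1 ha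
  obtain ⟨hb1, hb2⟩ := Finset.mem_filter.1 hb
  obtain ⟨hc1, hc2⟩ := Finset.mem_filter.1 hc
  obtain ⟨a1,a2⟩ := a; obtain ⟨b1,b2⟩ := b; obtain ⟨c1,c2⟩ := c
  simp only at ha2 hb2 hc2
  rw [ha2] at ha1 hab hac
  rw [hb2] at hb1 hab hbc
  rw [hc2] at hc1 hac hbc
  simp only [ne_eq, Prod.mk.injEq, true_and] at hab hac hbc
  by_cases hau : a2 = u
  · subst hau
    by_cases hbw : b2 = w
    · subst hbw
      exact ⟨c2, hc1, Ne.symm hac, Ne.symm hbc⟩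
    · exact ⟨b2, hb1, Ne.symm hab, hbw⟩
  · by_cases haw : a2 = w
    · subst haw
      by_cases hbu : b2 = u
      · subst hbu
        exact ⟨c2, hc1, Ne.symm hbc, Ne.symm hac⟩
      · exact ⟨b2, hb1, hbu, Ne.symm hab⟩
    · exact ⟨a2, ha1, hau, haw⟩

lemma chain_pres {R : Digr V → Digr V → Prop} {P : Digr V → Prop}
    (hP : ∀ {A B : Digr V}, R A B → P A → P B) {A B : Digr V}
    (h : Relation.ReflTransGen R A B) (hA : P A) : P B := by
  induction h with
  | refl => exact hA
  | tail _ h2 ih => exact hP h2 ih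

lemma fresh_fst {D : Digr V} {w : V} (hw : w ∉ D.verts) {c d : V} (h : (c,d) ∈ D.arcs) :
    c ≠ w := fun e => hw (e ▸ (D.arc_mem _ h).1)

lemma fresh_snd {D : Digr V} {w : V} (hw : w ∉ D.verts) {c d : V} (h : (c,d) ∈ D.arcs) :
    d ≠ w := fun e => hw (e ▸ (D.arc_mem _ h).2.1)


section Steps
variable {D D' : Digr V}

lemma subdivStep_InD1 (h : SubdivStep D D') (hi : InD1 D) : InD1 D' := by
  obtain ⟨u, v, w, huv, hw, hver, ha⟩ := h
  have hwv : w ≠ v := fun e => hw (e ▸ (D.arc_mem _ huv).2.1)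
  intro p q r hp hq
  rw [ha] at hp hq
  simp only [Finset.mem_insert, Finset.mem_erase, Prod.mk.injEq, ne_eq] at hp hq
  rcases hp with hp | hp | ⟨hp1, hp2⟩ <;> rcases hq with hq | hq | ⟨hq1, hq2⟩
  · rw [hp.1, hq.1]
  · have h2 := hq.2; rw [hp.2] at h2; exact absurd h2 hwv
  · have h2 := hq2; rw [hp.2] at h2; exact absurd rfl (fresh_snd hw h2)
  · have h2 := hp.2; rw [hq.2] at h2; exact absurd h2 hwv
  · rw [hp.1, hq.1]
  · have h2 := hq2; rw [hp.2] at h2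
    exact absurd ⟨hi q u v h2 huv, hp.2⟩ hq1
  · have h2 := hp2; rw [hq.2] at h2; exact absurd rfl (fresh_snd hw h2)
  · have h2 := hp2; rw [hq.2] at h2
    exact absurd ⟨hi p u v h2 huv, hq.2⟩ hp1
  · exact hi p q r hp2 hq2

lemma subdivStep_RootBig (h : SubdivStep D D') (hr : RootBig D) : RootBig D' := by
  obtain ⟨u, v, w, huv, hw, hver, ha⟩ := h
  intro b hb hno
  have hmem : ∀ c d : V, (c,d) ∈ D'.arcs ↔
      (c,d) = (u,w) ∨ (c,d) = (w,v) ∨ ((c,d) ∈ D.arcs ∧ (c,d) ≠ (u,v)) := by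
    intro c d
    rw [ha]
    simp only [Finset.mem_insert, Finset.mem_erase, ne_eq]
    tauto
  have hbw : b ≠ w := by
    rintro rfl
    exact hno u ((hmem u b).2 (Or.inl rfl))
  have hbD : b ∈ D.verts := by
    rw [hver] at hb
    rcases Finset.mem_insert.1 hb with rfl | h'
    · exact absurd rfl hbw
    · exact h'
  have hnoD : ∀ p, (p, b) ∉ D.arcs := by
    intro p hp
    by_cases hbv : (p, b) = (u, v)
    · simp only [Prod.mk.injEq] at hbv
      refine hno w ((hmem w b).2 (Or.inr (Or.inl ?_)))
      rw [hbv.2]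
    · exact hno p ((hmem p b).2 (Or.inr (Or.inr ⟨hp, hbv⟩)))
  obtain ⟨c, c', h1, h2, hne⟩ := hr b hbD hnoD
  by_cases e1 : (b, c) = (u, v)
  · simp only [Prod.mk.injEq] at e1
    have hcv : c = v := e1.2
    have hbu : b = u := e1.1
    have hc'v : c' ≠ v := fun e => hne (by rw [hcv, e])
    refine ⟨w, c', (hmem b w).2 (Or.inl (by rw [hbu])),
      (hmem b c').2 (Or.inr (Or.inr ⟨h2, ?_⟩)), Ne.symm (fresh_snd hw h2)⟩
    exact fun e => hc'v (Prod.ext_iff.1 e).2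
  · by_cases e2 : (b, c') = (u, v)
    · simp only [Prod.mk.injEq] at e2
      refine ⟨c, w, (hmem b c).2 (Or.inr (Or.inr ⟨h1, e1⟩)),
        (hmem b w).2 (Or.inl (by rw [e2.1])), fresh_snd hw h1⟩
    · exact ⟨c, c', (hmem b c).2 (Or.inr (Or.inr ⟨h1, e1⟩)),
        (hmem b c').2 (Or.inr (Or.inr ⟨h2, e2⟩)), hne⟩

lemma outSplit_mem (h : OutSplit D D') :
    ∃ v u w x, 3 ≤ D.outDeg v ∧ (v,u) ∈ D.arcs ∧ (v,w) ∈ D.arcs ∧ u ≠ w ∧ x ∉ D.verts ∧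
      D'.verts = insert x D.verts ∧
      ∀ c d : V, ((c,d) ∈ D'.arcs ↔ (c,d) = (v,x) ∨ (c,d) = (x,u) ∨ (c,d) = (x,w) ∨
        ((c,d) ∈ D.arcs ∧ (c,d) ≠ (v,u) ∧ (c,d) ≠ (v,w))) := by
  obtain ⟨v, u, w, x, h3, hvu, hvw, huw, hx, hver, ha⟩ := h
  refine ⟨v, u, w, x, h3, hvu, hvw, huw, hx, hver, fun c d => ?_⟩
  rw [ha]
  simp only [Finset.mem_insert, Finset.mem_erase, ne_eq]
  tauto

omit [DecidableEq V] in
lemma pair_ne_fst {a b c d : V} (h : ¬ a = c) : (a,b) ≠ (c,d) :=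
  fun e => h (Prod.ext_iff.1 e).1

omit [DecidableEq V] in
lemma pair_ne_fst' {a b c d : V} (h : ¬ b = d) : (a,b) ≠ (c,d) :=
  fun e => h (Prod.ext_iff.1 e).2

omit [DecidableEq V] in
lemma pair_ne_snd {a b c d : V} (h : ¬ b = d) : (a,b) ≠ (c,d) :=
  fun e => h (Prod.ext_iff.1 e).2

omit [DecidableEq V] in
lemma pfst {a b c d : V} (e : (a,b) = (c,d)) : a = c := congrArg Prod.fst e

omit [DecidableEq V] in
lemma psnd {a b c d : V} (e : (a,b) = (c,d)) : b = d := congrArg Prod.snd e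

omit [DecidableEq V] in
lemma pext {a b c d : V} (h1 : a = c) (h2 : b = d) : (a,b) = (c,d) := by rw [h1, h2]

omit [DecidableEq V] in
lemma mem_ne {s : Finset V} {a b : V} (ha : a ∈ s) (hb : b ∉ s) : a ≠ b :=
  fun e => hb (e ▸ ha)

omit [DecidableEq V] in
lemma pair_ne_snd' {a b c d : V} (h : ¬ b = d) : (a,b) ≠ (c,d) :=
  fun e => h (Prod.ext_iff.1 e).2

lemma outSplit_InD1 (h : OutSplit D D') (hi : InD1 D) : InD1 D' := by
  obtain ⟨v, u, w, x, h3, hvu, hvw, huw, hx, hver, hmem⟩ := outSplit_mem h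
  have hux : u ≠ x := fresh_snd hx hvu
  have hwx : w ≠ x := fresh_snd hx hvw
  intro p q r hp hq
  rw [hmem] at hp hq
  simp only [Prod.mk.injEq, ne_eq] at hp hq
  rcases hp with hp | hp | hp | ⟨hpm, hpu, hpw⟩ <;>
    rcases hq with hq | hq | hq | ⟨hqm, hqu, hqw⟩
  · rw [hp.1, hq.1]
  · have h2 := hq.2; rw [hp.2] at h2; exact absurd h2.symm hux
  · have h2 := hq.2; rw [hp.2] at h2; exact absurd h2.symm hwx
  · have h2 := hqm; rw [hp.2] at h2; exact absurd rfl (fresh_snd hx h2)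
  · have h2 := hp.2; rw [hq.2] at h2; exact absurd h2.symm hux
  · rw [hp.1, hq.1]
  · have h2 := hq.2; rw [hp.2] at h2; exact absurd h2 huw
  · have h2 := hqm; rw [hp.2] at h2
    exact absurd ⟨hi q v u h2 hvu, hp.2⟩ hqu
  · have h2 := hp.2; rw [hq.2] at h2; exact absurd h2.symm hwx
  · have h2 := hp.2; rw [hq.2] at h2; exact absurd h2 huw
  · rw [hp.1, hq.1]
  · have h2 := hqm; rw [hp.2] at h2
    exact absurd ⟨hi q v w h2 hvw, hp.2⟩ hqw
  · have h2 := hpm; rw [hq.2] at h2; exact absurd rfl (fresh_snd hx h2)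
  · have h2 := hpm; rw [hq.2] at h2
    exact absurd ⟨hi p v u h2 hvu, hq.2⟩ hpu
  · have h2 := hpm; rw [hq.2] at h2
    exact absurd ⟨hi p v w h2 hvw, hq.2⟩ hpw
  · exact hi p q r hpm hqm

lemma outSplit_NoV11 (h : OutSplit D D') (hn : NoV11 D) : NoV11 D' := by
  obtain ⟨v, u, w, x, h3, hvu, hvw, huw, hx, hver, hmem⟩ := outSplit_mem h
  intro p r q hpr hrq
  have hpr' := hpr
  rw [hmem] at hpr hrq
  simp only [Prod.mk.injEq, ne_eq] at hpr hrq
  rcases hrq with hrq | hrq | hrq | ⟨hqm, hqu, hqw⟩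
  · obtain ⟨c, hc, hcu, hcw⟩ := exists_third_out u w h3
    refine ⟨c, ?_, ?_⟩
    · rw [hmem, hrq.1]
      exact Or.inr (Or.inr (Or.inr ⟨hc, pair_ne_fst' hcu, pair_ne_fst' hcw⟩))
    · rw [hrq.2]; exact fresh_snd hx hc
  · refine ⟨w, ?_, by rw [hrq.2]; exact Ne.symm huw⟩
    rw [hmem, hrq.1]; exact Or.inr (Or.inr (Or.inl rfl))
  · refine ⟨u, ?_, by rw [hrq.2]; exact huw⟩
    rw [hmem, hrq.1]; exact Or.inr (Or.inl rfl)
  · by_cases hrv : r = v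
    · refine ⟨x, ?_, Ne.symm (fresh_snd hx hqm)⟩
      rw [hmem, hrv]; exact Or.inl rfl
    · have hin : ∃ p', (p', r) ∈ D.arcs := by
        rcases hpr with hpr | hpr | hpr | ⟨hpm, _, _⟩
        · have h2 := hqm; rw [hpr.2] at h2
          exact absurd rfl (fresh_fst hx h2)
        · exact ⟨v, by rw [hpr.2]; exact hvu⟩
        · exact ⟨v, by rw [hpr.2]; exact hvw⟩
        · exact ⟨p, hpm⟩
      obtain ⟨p', hp'⟩ := hin
      obtain ⟨q', hq', hne⟩ := hn p' r q hp' hqm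
      refine ⟨q', ?_, hne⟩
      rw [hmem]
      exact Or.inr (Or.inr (Or.inr ⟨hq', pair_ne_fst hrv, pair_ne_fst hrv⟩))

lemma outSplit_RootBig (h : OutSplit D D') (hr : RootBig D) : RootBig D' := by
  obtain ⟨v, u, w, x, h3, hvu, hvw, huw, hx, hver, hmem⟩ := outSplit_mem h
  intro b hb hno
  have hbx : b ≠ x := by
    rintro rfl
    exact hno v ((hmem v b).2 (Or.inl rfl))
  have hbu : b ≠ u := by
    rintro rfl
    exact hno x ((hmem x b).2 (Or.inr (Or.inl rfl)))
  have hbw : b ≠ w := by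
    rintro rfl
    exact hno x ((hmem x b).2 (Or.inr (Or.inr (Or.inl rfl))))
  have hbD : b ∈ D.verts := by
    rw [hver] at hb
    rcases Finset.mem_insert.1 hb with rfl | h'
    · exact absurd rfl hbx
    · exact h'
  have hnoD : ∀ p, (p, b) ∉ D.arcs := by
    intro p hp
    exact hno p ((hmem p b).2 (Or.inr (Or.inr (Or.inr ⟨hp, pair_ne_snd hbu, pair_ne_snd hbw⟩))))
  obtain ⟨c, c', h1, h2, hne⟩ := hr b hbD hnoD
  by_cases hbv : b = v
  · obtain ⟨c'', hc'', hcu, hcw⟩ := exists_third_out u w h3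
    refine ⟨x, c'', (hmem b x).2 (Or.inl (by rw [hbv])),
      (hmem b c'').2 (Or.inr (Or.inr (Or.inr ⟨by rw [hbv]; exact hc'', pair_ne_snd' hcu, pair_ne_snd' hcw⟩))),
      Ne.symm (fresh_snd hx hc'')⟩
  · exact ⟨c, c', (hmem b c).2 (Or.inr (Or.inr (Or.inr ⟨h1, pair_ne_fst hbv, pair_ne_fst hbv⟩))),
      (hmem b c').2 (Or.inr (Or.inr (Or.inr ⟨h2, pair_ne_fst hbv, pair_ne_fst hbv⟩))), hne⟩

lemma inSplit_mem (h : InSplit D D') :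
    ∃ v u w x, 3 ≤ D.inDeg v ∧ (u,v) ∈ D.arcs ∧ (w,v) ∈ D.arcs ∧ u ≠ w ∧ x ∉ D.verts ∧
      D'.verts = insert x D.verts ∧
      ∀ c d : V, ((c,d) ∈ D'.arcs ↔ (c,d) = (u,x) ∨ (c,d) = (w,x) ∨ (c,d) = (x,v) ∨
        ((c,d) ∈ D.arcs ∧ (c,d) ≠ (u,v) ∧ (c,d) ≠ (w,v))) := by
  obtain ⟨v, u, w, x, h3, huv, hwv, huw, hx, hver, ha⟩ := h
  refine ⟨v, u, w, x, h3, huv, hwv, huw, hx, hver, fun c d => ?_⟩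
  rw [ha]
  simp only [Finset.mem_insert, Finset.mem_erase, ne_eq]
  tauto

lemma inSplit_OutLE2 (h : InSplit D D') (ho : OutLE2 D) : OutLE2 D' := by
  obtain ⟨v, u, w, x, h3, huv, hwv, huw, hx, hver, hmem⟩ := inSplit_mem h
  intro y a b c hya hyb hyc
  by_cases hyx : y = x
  · have hv : ∀ d, (y,d) ∈ D'.arcs → d = v := by
      intro d hd
      rw [hmem] at hd
      simp only [Prod.mk.injEq] at hd
      rcases hd with hd | hd | hd | ⟨hd, _, _⟩
      · exact absurd (hyx ▸ hd.1 : x = u).symm (fresh_fst hx huv)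
      · exact absurd (hyx ▸ hd.1 : x = w).symm (fresh_fst hx hwv)
      · exact hd.2
      · exact absurd rfl (fresh_fst hx (hyx ▸ hd))
    rw [hv a hya, hv b hyb]
    exact Or.inl rfl
  · have key : ∀ d, (y,d) ∈ D'.arcs →
        ((y, if d = x then v else d) ∈ D.arcs ∧ (d = x → (y = u ∨ y = w)) ∧
          (d ≠ x → ¬(y = u ∧ d = v) ∧ ¬(y = w ∧ d = v))) := by
      intro d hd
      rw [hmem] at hd
      simp only [Prod.mk.injEq] at hd
      rcases hd with hd | hd | hd | ⟨hd, hd1, hd2⟩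
      · rw [hd.1, if_pos hd.2]
        exact ⟨huv, fun _ => Or.inl rfl, fun hdx => absurd hd.2 hdx⟩
      · rw [hd.1, if_pos hd.2]
        exact ⟨hwv, fun _ => Or.inr rfl, fun hdx => absurd hd.2 hdx⟩
      · exact absurd hd.1 hyx
      · have hdx : d ≠ x := fresh_snd hx hd
        rw [if_neg hdx]
        refine ⟨hd, fun e => absurd e hdx, fun _ => ⟨?_, ?_⟩⟩
        · rintro ⟨rfl, rfl⟩
          exact hd1 (by simp)
        · rintro ⟨rfl, rfl⟩
          exact hd2 (by simp)
    have inj : ∀ d e, (y,d) ∈ D'.arcs → (y,e) ∈ D'.arcs →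
        (if d = x then v else d) = (if e = x then v else e) → d = e := by
      intro d e hd he heq
      by_cases hdx : d = x <;> by_cases hex : e = x
      · rw [hdx, hex]
      · rw [if_pos hdx, if_neg hex] at heq
        rcases (key d hd).2.1 hdx with hyu | hyw
        · exact absurd ⟨hyu, heq.symm⟩ ((key e he).2.2 hex).1
        · exact absurd ⟨hyw, heq.symm⟩ ((key e he).2.2 hex).2
      · rw [if_neg hdx, if_pos hex] at heq
        rcases (key e he).2.1 hex with hyu | hyw
        · exact absurd ⟨hyu, heq⟩ ((key d hd).2.2 hdx).1
        · exact absurd ⟨hyw, heq⟩ ((key d hd).2.2 hdx).2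
      · rw [if_neg hdx, if_neg hex] at heq
        exact heq
    rcases ho y _ _ _ (key a hya).1 (key b hyb).1 (key c hyc).1 with h' | h' | h'
    · exact Or.inl (inj a b hya hyb h')
    · exact Or.inr (Or.inl (inj a c hya hyc h'))
    · exact Or.inr (Or.inr (inj b c hyb hyc h'))

end Steps

lemma subdivStep_mem {S T' : Digr V} (h : SubdivStep S T') :
    ∃ p₀ q₀ y, (p₀,q₀) ∈ S.arcs ∧ y ∉ S.verts ∧ T'.verts = insert y S.verts ∧
      ∀ c d : V, ((c,d) ∈ T'.arcs ↔ (c,d) = (p₀,y) ∨ (c,d) = (y,q₀) ∨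
        ((c,d) ∈ S.arcs ∧ (c,d) ≠ (p₀,q₀))) := by
  obtain ⟨p₀, q₀, y, hpq, hy, hver, ha⟩ := h
  refine ⟨p₀, q₀, y, hpq, hy, hver, fun c d => ?_⟩
  rw [ha]
  simp only [Finset.mem_insert, Finset.mem_erase, ne_eq]
  tauto

lemma contract_subdiv {Tg T' : Digr V} (hI : InD1 Tg) (hV : NoV11 Tg)
    (hsub : IsSubdivisionOf T' Tg) :
    ∀ b p q, (p,b) ∈ T'.arcs → (b,q) ∈ T'.arcs →
      (∀ p', (p',b) ∈ T'.arcs → p' = p) → (∀ q', (b,q') ∈ T'.arcs → q' = q) →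
      ∃ T'' : Digr V, IsSubdivisionOf T'' Tg ∧ T''.verts = T'.verts.erase b ∧
        T''.arcs = insert (p,q) ((T'.arcs.erase (p,b)).erase (b,q)) := by
  unfold IsSubdivisionOf at hsub
  induction hsub with
  | refl =>
    intro b p q hpb hbq _ huq
    obtain ⟨q', hq', hne⟩ := hV p b q hpb hbq
    exact absurd (huq q' hq') hne
  | @tail S T' hS hstep ih =>
    obtain ⟨p₀, q₀, y, hpq0, hy, hverts, hmem⟩ := subdivStep_mem hstep
    have hIS : InD1 S := chain_pres (P := InD1) (fun h hi => subdivStep_InD1 h hi) hS hI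
    have hIT : InD1 T' := subdivStep_InD1 hstep hIS
    have hp₀S : p₀ ∈ S.verts := (S.arc_mem _ hpq0).1
    have hq₀S : q₀ ∈ S.verts := (S.arc_mem _ hpq0).2.1
    have hp₀q₀ : p₀ ≠ q₀ := (S.arc_mem _ hpq0).2.2
    have hp₀y : p₀ ≠ y := fun e => hy (e ▸ hp₀S)
    have hq₀y : q₀ ≠ y := fun e => hy (e ▸ hq₀S)
    intro b p q hpb hbq hup huq
    by_cases hby : b = y
    · subst hby
      have hpp : p = p₀ := (hup p₀ ((hmem p₀ b).2 (Or.inl rfl))).symm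
      have hqq : q = q₀ := (huq q₀ ((hmem b q₀).2 (Or.inr (Or.inl rfl)))).symm
      subst hpp; subst hqq
      refine ⟨S, hS, ?_, ?_⟩
      · rw [hverts, Finset.erase_insert hy]
      · ext a; obtain ⟨c,d⟩ := a
        simp only [Finset.mem_insert, Finset.mem_erase, hmem, ne_eq]
        constructor
        · intro hcd
          by_cases e : (c,d) = (p,q)
          · exact Or.inl e
          · exact Or.inr ⟨pair_ne_fst (fresh_fst hy hcd), pair_ne_snd (fresh_snd hy hcd),
              Or.inr (Or.inr ⟨hcd, e⟩)⟩
        · rintro (e | ⟨h1, h2, (h3 | h3 | ⟨h3, _⟩)⟩)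
          · rw [e]; exact hpq0
          · exact absurd h3 h2
          · exact absurd h3 h1
          · exact h3
    · have hbS : b ∈ S.verts := by
        have := (T'.arc_mem _ hpb).2.1
        rw [hverts] at this
        rcases Finset.mem_insert.1 this with e | h'
        · exact absurd e hby
        · exact h'
      by_cases hbq0 : b = q₀
      · -- b = q₀
        subst hbq0
        have hpy : p = y := (hup y ((hmem y b).2 (Or.inr (Or.inl rfl)))).symm
        subst hpy
        obtain ⟨hbqS, hbqne⟩ : (b,q) ∈ S.arcs ∧ (b,q) ≠ (p₀,b) := by
          rcases (hmem b q).1 hbq with e | e | e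
          · exact absurd (Prod.ext_iff.1 e).1 (fun h => hp₀q₀ h.symm)
          · exact absurd (Prod.ext_iff.1 e).1 hby
          · exact e
        have hupS : ∀ p', (p',b) ∈ S.arcs → p' = p₀ := by
          intro p' h'
          by_cases e : (p',b) = (p₀,b)
          · exact (Prod.ext_iff.1 e).1
          · have h2 := hup p' ((hmem p' b).2 (Or.inr (Or.inr ⟨h', e⟩)))
            exact absurd (h2 ▸ (S.arc_mem _ h').1) hy
        have huqS : ∀ q', (b,q') ∈ S.arcs → q' = q := by
          intro q' h'
          by_cases e : (b,q') = (p₀,b)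
          · exact absurd (Prod.ext_iff.1 e).1 (fun h => hp₀q₀ h.symm)
          · exact huq q' ((hmem b q').2 (Or.inr (Or.inr ⟨h', e⟩)))
        obtain ⟨Sc, hScsub, hScv, hSca⟩ := ih b p₀ q hpq0 hbqS hupS huqS
        have hqS : q ∈ S.verts := (S.arc_mem _ hbqS).2.1
        have hbq' : b ≠ q := (S.arc_mem _ hbqS).2.2
        have hp₀b : p₀ ≠ b := (S.arc_mem _ hpq0).2.2
        have hqy : q ≠ p := fun e => hy (e ▸ hqS)
        have hySc : p ∉ Sc.verts := by
          rw [hScv]; exact fun hc => hy (Finset.mem_of_mem_erase hc)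
        have hnotin : (p₀,q) ∉ S.arcs := fun h => hp₀b (hIS p₀ b q h hbqS)
        refine ⟨⟨insert p Sc.verts, insert (p₀,p) (insert (p,q) (Sc.arcs.erase (p₀,q))), ?_⟩,
          Relation.ReflTransGen.tail hScsub
            ⟨p₀, q, p, by rw [hSca]; exact Finset.mem_insert_self _ _, hySc, rfl, rfl⟩, ?_, ?_⟩
        · rintro ⟨c,d⟩ hcd
          simp only [Finset.mem_insert, Finset.mem_erase, Prod.mk.injEq] at hcd
          rcases hcd with ⟨e1, e2⟩ | ⟨e1, e2⟩ | ⟨hne, hcd⟩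
          · subst e1; subst e2
            exact ⟨Finset.mem_insert_of_mem (by rw [hScv]; exact Finset.mem_erase.2 ⟨hp₀b, hp₀S⟩),
              Finset.mem_insert_self _ _, hp₀y⟩
          · subst e1; subst e2
            exact ⟨Finset.mem_insert_self _ _,
              Finset.mem_insert_of_mem (by rw [hScv]; exact Finset.mem_erase.2 ⟨Ne.symm hbq', hqS⟩),
              Ne.symm hqy⟩
          · obtain ⟨m1, m2, m3⟩ := Sc.arc_mem _ hcd
            exact ⟨Finset.mem_insert_of_mem m1, Finset.mem_insert_of_mem m2, m3⟩
        · show insert p Sc.verts = T'.verts.erase b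
          rw [hScv, hverts, Finset.erase_insert_of_ne (Ne.symm hby)]
        · show insert (p₀,p) (insert (p,q) (Sc.arcs.erase (p₀,q))) = _
          rw [hSca]
          ext a; obtain ⟨c,d⟩ := a
          simp only [Finset.mem_insert, Finset.mem_erase, hmem, ne_eq]
          constructor
          · rintro (e | e | ⟨ne1, (e2 | ⟨n1, n2, hS'⟩)⟩)
            · simp only [Prod.mk.injEq] at e
              obtain ⟨rfl, rfl⟩ := e
              exact Or.inr ⟨pair_ne_fst hp₀b, pair_ne_snd (fun h => hby h.symm), Or.inl rfl⟩
            · exact Or.inl e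
            · exact absurd e2 ne1
            · exact Or.inr ⟨n1, fun e' => fresh_fst hy hS' (Prod.ext_iff.1 e').1,
                Or.inr (Or.inr ⟨hS', n2⟩)⟩
          · rintro (e | ⟨ne1, ne2, (e3 | e3 | ⟨hS', n3⟩)⟩)
            · exact Or.inr (Or.inl e)
            · exact Or.inl e3
            · exact absurd e3 ne2
            · exact Or.inr (Or.inr ⟨fun e => hnotin (e ▸ hS'), Or.inr ⟨ne1, n3, hS'⟩⟩)
      · by_cases hbp0 : b = p₀
        · -- b = p₀
          subst hbp0
          have hqy : q = y := (huq y ((hmem b y).2 (Or.inl rfl))).symm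
          subst hqy
          obtain ⟨hpbS, hpbne⟩ : (p,b) ∈ S.arcs ∧ (p,b) ≠ (b,q₀) := by
            rcases (hmem p b).1 hpb with e | e | e
            · exact absurd (Prod.ext_iff.1 e).2 hby
            · exact absurd (Prod.ext_iff.1 e).2 hbq0
            · exact e
          have hupS : ∀ p', (p',b) ∈ S.arcs → p' = p := by
            intro p' h'
            by_cases e : (p',b) = (b,q₀)
            · exact absurd (Prod.ext_iff.1 e).2 hbq0
            · exact hup p' ((hmem p' b).2 (Or.inr (Or.inr ⟨h', e⟩)))
          have huqS : ∀ q', (b,q') ∈ S.arcs → q' = q₀ := by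
            intro q' h'
            by_cases e : (b,q') = (b,q₀)
            · exact (Prod.ext_iff.1 e).2
            · have h2 := huq q' ((hmem b q').2 (Or.inr (Or.inr ⟨h', e⟩)))
              exact absurd (h2 ▸ (S.arc_mem _ h').2.1) hy
          obtain ⟨Sc, hScsub, hScv, hSca⟩ := ih b p q₀ hpbS hpq0 hupS huqS
          have hpS : p ∈ S.verts := (S.arc_mem _ hpbS).1
          have hpb' : p ≠ b := (S.arc_mem _ hpbS).2.2
          have hbq₀ : b ≠ q₀ := (S.arc_mem _ hpq0).2.2
          have hpy : p ≠ q := fun e => hy (e ▸ hpS)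
          have hySc : q ∉ Sc.verts := by
            rw [hScv]; exact fun hc => hy (Finset.mem_of_mem_erase hc)
          have hnotin : (p,q₀) ∉ S.arcs := fun h => hpb' (hIS p b q₀ h hpq0)
          refine ⟨⟨insert q Sc.verts, insert (p,q) (insert (q,q₀) (Sc.arcs.erase (p,q₀))), ?_⟩,
            Relation.ReflTransGen.tail hScsub
              ⟨p, q₀, q, by rw [hSca]; exact Finset.mem_insert_self _ _, hySc, rfl, rfl⟩, ?_, ?_⟩
          · rintro ⟨c,d⟩ hcd
            simp only [Finset.mem_insert, Finset.mem_erase, Prod.mk.injEq] at hcd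
            rcases hcd with ⟨e1, e2⟩ | ⟨e1, e2⟩ | ⟨hne, hcd⟩
            · subst e1; subst e2
              exact ⟨Finset.mem_insert_of_mem (by rw [hScv]; exact Finset.mem_erase.2 ⟨hpb', hpS⟩),
                Finset.mem_insert_self _ _, hpy⟩
            · subst e1; subst e2
              exact ⟨Finset.mem_insert_self _ _,
                Finset.mem_insert_of_mem (by rw [hScv]; exact Finset.mem_erase.2 ⟨Ne.symm hbq₀, hq₀S⟩),
                Ne.symm hq₀y⟩
            · obtain ⟨m1, m2, m3⟩ := Sc.arc_mem _ hcd
              exact ⟨Finset.mem_insert_of_mem m1, Finset.mem_insert_of_mem m2, m3⟩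
          · show insert q Sc.verts = T'.verts.erase b
            rw [hScv, hverts, Finset.erase_insert_of_ne (Ne.symm hby)]
          · show insert (p,q) (insert (q,q₀) (Sc.arcs.erase (p,q₀))) = _
            rw [hSca]
            ext a; obtain ⟨c,d⟩ := a
            simp only [Finset.mem_insert, Finset.mem_erase, hmem, ne_eq]
            constructor
            · rintro (e | e | ⟨ne1, (e2 | ⟨n1, n2, hS'⟩)⟩)
              · exact Or.inl e
              · simp only [Prod.mk.injEq] at e
                obtain ⟨rfl, rfl⟩ := e
                exact Or.inr ⟨pair_ne_fst (fun h => hby h.symm), pair_ne_snd (fun h => hbq₀ h.symm),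
                  Or.inr (Or.inl rfl)⟩
              · exact absurd e2 ne1
              · exact Or.inr ⟨fun e' => fresh_snd hy hS' (Prod.ext_iff.1 e').2, n2,
                  Or.inr (Or.inr ⟨hS', n1⟩)⟩
            · rintro (e | ⟨ne1, ne2, (e3 | e3 | ⟨hS', n3⟩)⟩)
              · exact Or.inl e
              · exact absurd e3 ne1
              · exact Or.inr (Or.inl e3)
              · exact Or.inr (Or.inr ⟨fun e => hnotin (e ▸ hS'), Or.inr ⟨n3, ne2, hS'⟩⟩)
        · -- b ∉ {y, p₀, q₀}
          have hbp0' : p₀ ≠ b := fun h => hbp0 h.symm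
          have hq₀b : q₀ ≠ b := fun h => hbq0 h.symm
          obtain ⟨hpbS, hpbne⟩ : (p,b) ∈ S.arcs ∧ (p,b) ≠ (p₀,q₀) := by
            rcases (hmem p b).1 hpb with e | e | e
            · exact absurd (Prod.ext_iff.1 e).2 hby
            · exact absurd (Prod.ext_iff.1 e).2 hbq0
            · exact e
          obtain ⟨hbqS, hbqne⟩ : (b,q) ∈ S.arcs ∧ (b,q) ≠ (p₀,q₀) := by
            rcases (hmem b q).1 hbq with e | e | e
            · exact absurd (Prod.ext_iff.1 e).1 hbp0
            · exact absurd (Prod.ext_iff.1 e).1 hby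
            · exact e
          have hupS : ∀ p', (p',b) ∈ S.arcs → p' = p := by
            intro p' h'
            by_cases e : (p',b) = (p₀,q₀)
            · exact absurd (Prod.ext_iff.1 e).2 hbq0
            · exact hup p' ((hmem p' b).2 (Or.inr (Or.inr ⟨h', e⟩)))
          have huqS : ∀ q', (b,q') ∈ S.arcs → q' = q := by
            intro q' h'
            by_cases e : (b,q') = (p₀,q₀)
            · exact absurd (Prod.ext_iff.1 e).1 hbp0
            · exact huq q' ((hmem b q').2 (Or.inr (Or.inr ⟨h', e⟩)))
          obtain ⟨Sc, hScsub, hScv, hSca⟩ := ih b p q hpbS hbqS hupS huqS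
          have hpb' : p ≠ b := (S.arc_mem _ hpbS).2.2
          have hbq' : b ≠ q := (S.arc_mem _ hbqS).2.2
          have hpqne : (p,q) ≠ (p₀,q₀) := by
            intro e
            simp only [Prod.mk.injEq] at e
            have h1 : (y,q) ∈ T'.arcs := by
              rw [e.2]; exact (hmem y q₀).2 (Or.inr (Or.inl rfl))
            exact hby (hIT b y q hbq h1)
          have hySc : y ∉ Sc.verts := by
            rw [hScv]; exact fun hc => hy (Finset.mem_of_mem_erase hc)
          have hmemSc : (p₀,q₀) ∈ Sc.arcs := by
            rw [hSca]
            by_cases epq : (p₀,q₀) = (p,q)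
            · exact Finset.mem_insert.2 (Or.inl epq)
            · exact Finset.mem_insert.2 (Or.inr (Finset.mem_erase.2 ⟨pair_ne_fst hbp0',
                Finset.mem_erase.2 ⟨pair_ne_snd hq₀b, hpq0⟩⟩))
          refine ⟨⟨insert y Sc.verts, insert (p₀,y) (insert (y,q₀) (Sc.arcs.erase (p₀,q₀))), ?_⟩,
            Relation.ReflTransGen.tail hScsub ⟨p₀, q₀, y, hmemSc, hySc, rfl, rfl⟩, ?_, ?_⟩
          · rintro ⟨c,d⟩ hcd
            simp only [Finset.mem_insert, Finset.mem_erase, Prod.mk.injEq] at hcd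
            rcases hcd with ⟨e1, e2⟩ | ⟨e1, e2⟩ | ⟨hne, hcd⟩
            · subst e1; subst e2
              exact ⟨Finset.mem_insert_of_mem (by rw [hScv]; exact Finset.mem_erase.2 ⟨hbp0', hp₀S⟩),
                Finset.mem_insert_self _ _, hp₀y⟩
            · subst e1; subst e2
              exact ⟨Finset.mem_insert_self _ _,
                Finset.mem_insert_of_mem (by rw [hScv]; exact Finset.mem_erase.2 ⟨hq₀b, hq₀S⟩),
                Ne.symm hq₀y⟩
            · obtain ⟨m1, m2, m3⟩ := Sc.arc_mem _ hcd
              exact ⟨Finset.mem_insert_of_mem m1, Finset.mem_insert_of_mem m2, m3⟩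
          · show insert y Sc.verts = T'.verts.erase b
            rw [hScv, hverts, Finset.erase_insert_of_ne (Ne.symm hby)]
          · show insert (p₀,y) (insert (y,q₀) (Sc.arcs.erase (p₀,q₀))) = _
            rw [hSca]
            ext a; obtain ⟨c,d⟩ := a
            simp only [Finset.mem_insert, Finset.mem_erase, hmem, ne_eq]
            constructor
            · rintro (e | e | ⟨ne1, (e2 | ⟨n1, n2, hS'⟩)⟩)
              · simp only [Prod.mk.injEq] at e
                obtain ⟨rfl, rfl⟩ := e
                exact Or.inr ⟨pair_ne_fst hbp0', pair_ne_snd (fun h => hby h.symm), Or.inl rfl⟩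
              · simp only [Prod.mk.injEq] at e
                obtain ⟨rfl, rfl⟩ := e
                exact Or.inr ⟨pair_ne_fst (fun h => hby h.symm), pair_ne_snd hq₀b,
                  Or.inr (Or.inl rfl)⟩
              · exact Or.inl e2
              · exact Or.inr ⟨n1, n2, Or.inr (Or.inr ⟨hS', ne1⟩)⟩
            · rintro (e | ⟨ne1, ne2, (e3 | e3 | ⟨hS', n3⟩)⟩)
              · exact Or.inr (Or.inr ⟨fun h => hpqne (e.symm.trans h), Or.inl e⟩)
              · exact Or.inl e3
              · exact Or.inr (Or.inl e3)
              · exact Or.inr (Or.inr ⟨n3, Or.inr ⟨ne1, ne2, hS'⟩⟩)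


section Firm
variable {D D' Tg : Digr V}

lemma firm_forward_core {u v w x : V}
    (huv : (u,v) ∈ D.arcs) (hwv : (w,v) ∈ D.arcs) (huw : u ≠ w) (hx : x ∉ D.verts)
    (hverts : D'.verts = insert x D.verts)
    (hmem : ∀ c d : V, ((c,d) ∈ D'.arcs ↔ (c,d) = (u,x) ∨ (c,d) = (w,x) ∨ (c,d) = (x,v) ∨
      ((c,d) ∈ D.arcs ∧ (c,d) ≠ (u,v) ∧ (c,d) ≠ (w,v))))
    (hIg : InD1 Tg) {T' M : Digr V} (hsub : IsSubdivisionOf T' Tg) (hLM : LeafMono M D)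
    (hiso : LeafIso T' M) (hMuv : (u,v) ∈ M.arcs) : FirmDisp D' Tg := by
  obtain ⟨⟨hMv, hMa⟩, hMl⟩ := hLM
  obtain ⟨ι, hbij, harcs, hleaf⟩ := hiso
  have hIT' : InD1 T' := chain_pres (P := InD1) (fun h hi => subdivStep_InD1 h hi) hsub hIg
  have huD : u ∈ D.verts := (D.arc_mem _ huv).1
  have hvD : v ∈ D.verts := (D.arc_mem _ huv).2.1
  have hwD : w ∈ D.verts := (D.arc_mem _ hwv).1
  have hux : u ≠ x := fun e => hx (e ▸ huD)
  have hvx : v ≠ x := fun e => hx (e ▸ hvD)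
  have huM : u ∈ M.verts := (M.arc_mem _ hMuv).1
  have hvM : v ∈ M.verts := (M.arc_mem _ hMuv).2.1
  have hxM : x ∉ M.verts := fun hc => hx (hMv hc)
  have hleafD : D.leaves ⊆ D'.leaves := by
    intro ℓ hℓ
    refine ⟨by rw [hverts]; exact Finset.mem_insert_of_mem hℓ.1, (outDeg_eq_zero_iff _ _).2 ?_⟩
    intro c hc
    rcases (hmem ℓ c).1 hc with e | e | e | ⟨e, _, _⟩
    · simp only [Prod.mk.injEq] at e
      exact (outDeg_eq_zero_iff D ℓ).1 hℓ.2 v (e.1 ▸ huv)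
    · simp only [Prod.mk.injEq] at e
      exact (outDeg_eq_zero_iff D ℓ).1 hℓ.2 v (e.1 ▸ hwv)
    · simp only [Prod.mk.injEq] at e
      exact hx (e.1 ▸ hℓ.1)
    · exact (outDeg_eq_zero_iff D ℓ).1 hℓ.2 c e
  -- preimages of u and v
  obtain ⟨a, haT', hau⟩ := hbij.2.2 (Finset.mem_coe.2 huM)
  obtain ⟨b, hbT', hbv⟩ := hbij.2.2 (Finset.mem_coe.2 hvM)
  have haT : a ∈ T'.verts := Finset.mem_coe.1 haT'
  have hbT : b ∈ T'.verts := Finset.mem_coe.1 hbT'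
  have hab : (a,b) ∈ T'.arcs := (harcs a b haT hbT).2 (by rw [hau, hbv]; exact hMuv)
  -- (w,v) is not an arc of M
  have hMwv : (w,v) ∉ M.arcs := by
    intro hW
    have hwM : w ∈ M.verts := (M.arc_mem _ hW).1
    obtain ⟨a', haT2, haw⟩ := hbij.2.2 (Finset.mem_coe.2 hwM)
    have haT2' : a' ∈ T'.verts := Finset.mem_coe.1 haT2
    have hab2 : (a',b) ∈ T'.arcs := (harcs a' b haT2' hbT).2 (by rw [haw, hbv]; exact hW)
    have : a = a' := hIT' a a' b hab hab2
    exact huw (by rw [← hau, ← haw, this])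
  -- a fresh vertex for T'
  obtain ⟨z, hzT⟩ : ∃ z, z ∉ T'.verts := by
    by_cases hxT : x ∈ T'.verts
    · have hcard : T'.verts.card = M.verts.card := by
        calc T'.verts.card = (↑T'.verts : Set V).ncard := (Set.ncard_coe_finset _).symm
          _ = (ι '' ↑T'.verts).ncard := (Set.ncard_image_of_injOn hbij.2.1).symm
          _ = (↑M.verts : Set V).ncard := by rw [hbij.image_eq]
          _ = M.verts.card := Set.ncard_coe_finset _
      by_contra hcon
      push_neg at hcon
      have hsubM : M.verts ⊆ T'.verts := fun z _ => hcon z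
      have : M.verts = T'.verts := Finset.eq_of_subset_of_card_le hsubM (le_of_eq hcard)
      exact hxM (this ▸ hxT)
    · exact ⟨x, hxT⟩
  have haz : a ≠ z := fun e => hzT (by rw [← e]; exact haT)
  have hbz : b ≠ z := fun e => hzT (by rw [← e]; exact hbT)
  set ι' := Function.update ι z x with hι'
  have hι'T : ∀ t ∈ T'.verts, ι' t = ι t := fun t ht =>
    Function.update_of_ne (fun e => hzT (by rw [← e]; exact ht)) _ _
  have hι'z : ι' z = x := Function.update_self _ _ _
  refine ⟨⟨insert z T'.verts, insert (a,z) (insert (z,b) (T'.arcs.erase (a,b))), ?_⟩,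
    ⟨insert x M.verts, insert (u,x) (insert (x,v) (M.arcs.erase (u,v))), ?_⟩,
    Relation.ReflTransGen.tail hsub ⟨a, b, z, hab, hzT, rfl, rfl⟩, ⟨⟨?_, ?_⟩, ?_⟩, ι', ?_, ?_, ?_⟩
  · -- arc_mem for T''
    rintro ⟨c,d⟩ hcd
    simp only [Finset.mem_insert, Finset.mem_erase, Prod.mk.injEq] at hcd
    rcases hcd with ⟨rfl, rfl⟩ | ⟨rfl, rfl⟩ | ⟨_, hcd⟩
    · exact ⟨Finset.mem_insert_of_mem haT, Finset.mem_insert_self _ _, haz⟩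
    · exact ⟨Finset.mem_insert_self _ _, Finset.mem_insert_of_mem hbT, Ne.symm hbz⟩
    · obtain ⟨m1, m2, m3⟩ := T'.arc_mem _ hcd
      exact ⟨Finset.mem_insert_of_mem m1, Finset.mem_insert_of_mem m2, m3⟩
  · -- arc_mem for M'
    rintro ⟨c,d⟩ hcd
    simp only [Finset.mem_insert, Finset.mem_erase, Prod.mk.injEq] at hcd
    rcases hcd with ⟨rfl, rfl⟩ | ⟨rfl, rfl⟩ | ⟨_, hcd⟩
    · exact ⟨Finset.mem_insert_of_mem huM, Finset.mem_insert_self _ _, hux⟩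
    · exact ⟨Finset.mem_insert_self _ _, Finset.mem_insert_of_mem hvM, Ne.symm hvx⟩
    · obtain ⟨m1, m2, m3⟩ := M.arc_mem _ hcd
      exact ⟨Finset.mem_insert_of_mem m1, Finset.mem_insert_of_mem m2, m3⟩
  · -- M'.verts ⊆ D'.verts
    intro y hy
    rw [hverts]
    rcases Finset.mem_insert.1 hy with rfl | hy'
    · exact Finset.mem_insert_self _ _
    · exact Finset.mem_insert_of_mem (hMv hy')
  · -- M'.arcs ⊆ D'.arcs
    rintro ⟨c,d⟩ hcd
    simp only [Finset.mem_insert, Finset.mem_erase] at hcd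
    rw [hmem]
    rcases hcd with e | e | ⟨hne, hcd⟩
    · exact Or.inl e
    · exact Or.inr (Or.inr (Or.inl e))
    · exact Or.inr (Or.inr (Or.inr ⟨hMa hcd, hne, fun e => hMwv (e ▸ hcd)⟩))
  · -- M'.leaves ⊆ D'.leaves
    intro ℓ hℓ
    have hno : ∀ c, (ℓ, c) ∉ (insert (u,x) (insert (x,v) (M.arcs.erase (u,v)))) :=
      (outDeg_eq_zero_iff _ ℓ).1 hℓ.2
    have hℓx : ℓ ≠ x := by
      rintro rfl
      exact hno v (Finset.mem_insert_of_mem (Finset.mem_insert_self _ _))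
    have hℓu : ℓ ≠ u := by
      rintro rfl
      exact hno x (Finset.mem_insert_self _ _)
    have hℓM : ℓ ∈ M.verts := by
      rcases Finset.mem_insert.1 hℓ.1 with rfl | h'
      · exact absurd rfl hℓx
      · exact h'
    refine hleafD (hMl ⟨hℓM, (outDeg_eq_zero_iff _ _).2 ?_⟩)
    intro c hc
    by_cases e : (ℓ, c) = (u, v)
    · exact hℓu (Prod.ext_iff.1 e).1
    · exact hno c (Finset.mem_insert_of_mem (Finset.mem_insert_of_mem
        (Finset.mem_erase.2 ⟨e, hc⟩)))
  · -- BijOn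
    rw [Finset.coe_insert, Finset.coe_insert]
    refine ⟨?_, ?_, ?_⟩
    · rintro t (rfl | ht)
      · rw [hι'z]; exact Set.mem_insert _ _
      · rw [hι'T t ht]
        exact Set.mem_insert_of_mem _ (hbij.1 ht)
    · rintro t1 (rfl | h1) t2 (rfl | h2) he
      · rfl
      · rw [hι'z, hι'T t2 h2] at he
        exact absurd (he ▸ hbij.1 h2) hxM
      · rw [hι'z, hι'T t1 h1] at he
        exact absurd (he.symm ▸ hbij.1 h1) hxM
      · rw [hι'T t1 h1, hι'T t2 h2] at he
        exact hbij.2.1 h1 h2 he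
    · rintro m (rfl | hm)
      · exact ⟨z, Set.mem_insert _ _, hι'z⟩
      · obtain ⟨t, ht, hit⟩ := hbij.2.2 hm
        exact ⟨t, Set.mem_insert_of_mem _ ht, by rw [hι'T t ht]; exact hit⟩
  · -- arc correspondence
    intro s t hs ht
    simp only [Finset.mem_insert] at hs ht
    constructor
    · intro hst
      simp only [Finset.mem_insert, Finset.mem_erase, Prod.mk.injEq] at hst
      rcases hst with ⟨e1, e2⟩ | ⟨e1, e2⟩ | ⟨hne, hst⟩
      · have hs' : ι' s = u := by rw [e1, hι'T a haT]; exact hau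
        have ht' : ι' t = x := by rw [e2]; exact hι'z
        rw [hs', ht']
        exact Finset.mem_insert_self _ _
      · have hs' : ι' s = x := by rw [e1]; exact hι'z
        have ht' : ι' t = v := by rw [e2, hι'T b hbT]; exact hbv
        rw [hs', ht']
        exact Finset.mem_insert_of_mem (Finset.mem_insert_self _ _)
      · obtain ⟨hsT, htT, _⟩ := T'.arc_mem _ hst
        rw [hι'T s hsT, hι'T t htT]
        refine Finset.mem_insert_of_mem (Finset.mem_insert_of_mem (Finset.mem_erase.2
          ⟨?_, (harcs s t hsT htT).1 hst⟩))
        intro e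
        have e1 : ι s = u := pfst e
        have e2 : ι t = v := psnd e
        have h1 : s = a := hbij.2.1 hsT haT' (by rw [hau]; exact e1)
        have h2 : t = b := hbij.2.1 htT hbT' (by rw [hbv]; exact e2)
        exact hne (by rw [h1, h2])
    · intro hst
      simp only [Finset.mem_insert, Finset.mem_erase, Prod.mk.injEq] at hst
      have hsz : s ≠ z → s ∈ T'.verts := fun h => hs.resolve_left h
      have htz : t ≠ z → t ∈ T'.verts := fun h => ht.resolve_left h
      rcases hst with ⟨e1, e2⟩ | ⟨e1, e2⟩ | ⟨hne, hst⟩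
      · -- (ι's, ι't) = (u,x)
        have ht' : t = z := by
          by_contra h
          have := hbij.1 (htz h)
          rw [hι'T t (htz h)] at e2
          exact hxM (e2 ▸ this)
        have hs' : s ∈ T'.verts := by
          rcases hs with rfl | h
          · rw [hι'z] at e1; exact absurd e1.symm hux
          · exact h
        have : s = a := hbij.2.1 hs' haT' (by rw [hι'T s hs'] at e1; rw [e1, hau])
        simp only [Finset.mem_insert, Prod.mk.injEq]
        exact Or.inl ⟨this, ht'⟩
      · have hs' : s = z := by
          by_contra h
          have := hbij.1 (hsz h)
          rw [hι'T s (hsz h)] at e1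
          exact hxM (e1 ▸ this)
        have ht' : t ∈ T'.verts := by
          rcases ht with rfl | h
          · rw [hι'z] at e2; exact absurd e2.symm hvx
          · exact h
        have : t = b := hbij.2.1 ht' hbT' (by rw [hι'T t ht'] at e2; rw [e2, hbv])
        simp only [Finset.mem_insert, Prod.mk.injEq]
        exact Or.inr (Or.inl ⟨hs', this⟩)
      · have hs' : s ∈ T'.verts := by
          rcases hs with rfl | h
          · rw [hι'z] at hst
            exact absurd ((M.arc_mem _ hst).1) hxM
          · exact h
        have ht' : t ∈ T'.verts := by
          rcases ht with rfl | h
          · rw [hι'T s hs', hι'z] at hst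
            exact absurd ((M.arc_mem _ hst).2.1) hxM
          · exact h
        rw [hι'T s hs', hι'T t ht'] at hst
        refine Finset.mem_insert_of_mem (Finset.mem_insert_of_mem (Finset.mem_erase.2
          ⟨?_, (harcs s t hs' ht').2 hst⟩))
        intro e
        have e1 : s = a := pfst e
        have e2 : t = b := psnd e
        have f1 : ι' s = u := by rw [e1, hι'T a haT]; exact hau
        have f2 : ι' t = v := by rw [e2, hι'T b hbT]; exact hbv
        exact hne (by rw [f1, f2])
  · -- leaves fixed
    intro ℓ hℓ
    have hno : ∀ c, (ℓ, c) ∉ (insert (a,z) (insert (z,b) (T'.arcs.erase (a,b)))) :=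
      (outDeg_eq_zero_iff _ ℓ).1 hℓ.2
    have hℓz : ℓ ≠ z := by
      rintro rfl
      exact hno b (Finset.mem_insert_of_mem (Finset.mem_insert_self _ _))
    have hℓa : ℓ ≠ a := by
      rintro rfl
      exact hno z (Finset.mem_insert_self _ _)
    have hℓT : ℓ ∈ T'.verts := by
      rcases Finset.mem_insert.1 hℓ.1 with rfl | h'
      · exact absurd rfl hℓz
      · exact h'
    have : ℓ ∈ T'.leaves := by
      refine ⟨hℓT, (outDeg_eq_zero_iff _ _).2 ?_⟩
      intro c hc
      by_cases e : (ℓ, c) = (a, b)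
      · exact hℓa (Prod.ext_iff.1 e).1
      · exact hno c (Finset.mem_insert_of_mem (Finset.mem_insert_of_mem
          (Finset.mem_erase.2 ⟨e, hc⟩)))
    rw [hι'T ℓ hℓT]
    exact hleaf ℓ this

lemma firm_forward (h : InSplit D D') (hIg : InD1 Tg) (hf : FirmDisp D Tg) :
    FirmDisp D' Tg := by
  obtain ⟨v, u, w, x, h3, huv, hwv, huw, hx, hverts, hmem⟩ := inSplit_mem h
  obtain ⟨T', M, hsub, hLM, hiso⟩ := hf
  by_cases hMuv : (u,v) ∈ M.arcs
  · exact firm_forward_core huv hwv huw hx hverts hmem hIg hsub hLM hiso hMuv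
  · by_cases hMwv : (w,v) ∈ M.arcs
    · refine firm_forward_core hwv huv (Ne.symm huw) hx hverts
        (fun c d => (hmem c d).trans (by tauto)) hIg hsub hLM hiso hMwv
    · -- M avoids both arcs
      refine ⟨T', M, hsub, ⟨⟨?_, ?_⟩, ?_⟩, hiso⟩
      · intro y hy
        rw [hverts]
        exact Finset.mem_insert_of_mem (hLM.1.1 hy)
      · rintro ⟨c,d⟩ hcd
        rw [hmem]
        exact Or.inr (Or.inr (Or.inr ⟨hLM.1.2 hcd, fun e => hMuv (e ▸ hcd),
          fun e => hMwv (e ▸ hcd)⟩))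
      · intro ℓ hℓ
        have hℓD := hLM.2 hℓ
        refine ⟨by rw [hverts]; exact Finset.mem_insert_of_mem hℓD.1,
          (outDeg_eq_zero_iff _ _).2 ?_⟩
        intro c hc
        rcases (hmem ℓ c).1 hc with e | e | e | ⟨e, _, _⟩
        · simp only [Prod.mk.injEq] at e
          exact (outDeg_eq_zero_iff D ℓ).1 hℓD.2 v (e.1 ▸ huv)
        · simp only [Prod.mk.injEq] at e
          exact (outDeg_eq_zero_iff D ℓ).1 hℓD.2 v (e.1 ▸ hwv)
        · simp only [Prod.mk.injEq] at e
          exact hx (e.1 ▸ hℓD.1)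
        · exact (outDeg_eq_zero_iff D ℓ).1 hℓD.2 c e

lemma firm_backward_core {u v w x : V}
    (huv : (u,v) ∈ D.arcs) (hwv : (w,v) ∈ D.arcs) (huw : u ≠ w) (hx : x ∉ D.verts)
    (hverts : D'.verts = insert x D.verts)
    (hmem : ∀ c d : V, ((c,d) ∈ D'.arcs ↔ (c,d) = (u,x) ∨ (c,d) = (w,x) ∨ (c,d) = (x,v) ∨
      ((c,d) ∈ D.arcs ∧ (c,d) ≠ (u,v) ∧ (c,d) ≠ (w,v))))
    (hIg : InD1 Tg) (hVg : NoV11 Tg) {T' M' : Digr V} (hsub : IsSubdivisionOf T' Tg)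
    (hLM : LeafMono M' D') (hiso : LeafIso T' M')
    (hux' : (u,x) ∈ M'.arcs) (hxv' : (x,v) ∈ M'.arcs) : FirmDisp D Tg := by
  obtain ⟨⟨hMv, hMa⟩, hMl⟩ := hLM
  obtain ⟨ι, hbij, harcs, hleaf⟩ := hiso
  have hIT' : InD1 T' := chain_pres (P := InD1) (fun h hi => subdivStep_InD1 h hi) hsub hIg
  have huD : u ∈ D.verts := (D.arc_mem _ huv).1
  have hvD : v ∈ D.verts := (D.arc_mem _ huv).2.1
  have hwD : w ∈ D.verts := (D.arc_mem _ hwv).1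
  have huveq : u ≠ v := (D.arc_mem _ huv).2.2
  have hux : u ≠ x := fun e => hx (e ▸ huD)
  have hvx : v ≠ x := fun e => hx (e ▸ hvD)
  have hwx : w ≠ x := fun e => hx (e ▸ hwD)
  have hxout : ∀ c, (x,c) ∈ D'.arcs → c = v := by
    intro c hc
    rcases (hmem x c).1 hc with e | e | e | ⟨e, _, _⟩
    · exact absurd (pfst e) (Ne.symm hux)
    · exact absurd (pfst e) (Ne.symm hwx)
    · exact psnd e
    · exact absurd (D.arc_mem _ e).1 hx
  have hxin : ∀ p, (p,x) ∈ D'.arcs → p = u ∨ p = w := by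
    intro p hp
    rcases (hmem p x).1 hp with e | e | e | ⟨e, _, _⟩
    · exact Or.inl (pfst e)
    · exact Or.inr (pfst e)
    · exact absurd (psnd e) (Ne.symm hvx)
    · exact absurd (D.arc_mem _ e).2.1 hx
  have hxM : x ∈ M'.verts := (M'.arc_mem _ hxv').1
  have huM : u ∈ M'.verts := (M'.arc_mem _ hux').1
  have hvM : v ∈ M'.verts := (M'.arc_mem _ hxv').2.1
  obtain ⟨bx, hbxT', hbxx⟩ := hbij.2.2 (Finset.mem_coe.2 hxM)
  obtain ⟨pa, hpaT', hpau⟩ := hbij.2.2 (Finset.mem_coe.2 huM)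
  obtain ⟨qb, hqbT', hqbv⟩ := hbij.2.2 (Finset.mem_coe.2 hvM)
  have hbxT : bx ∈ T'.verts := Finset.mem_coe.1 hbxT'
  have hpaT : pa ∈ T'.verts := Finset.mem_coe.1 hpaT'
  have hqbT : qb ∈ T'.verts := Finset.mem_coe.1 hqbT'
  have hpab : (pa, bx) ∈ T'.arcs := (harcs pa bx hpaT hbxT).2 (by rw [hpau, hbxx]; exact hux')
  have hbq : (bx, qb) ∈ T'.arcs := (harcs bx qb hbxT hqbT).2 (by rw [hbxx, hqbv]; exact hxv')
  have huniq_in : ∀ p', (p', bx) ∈ T'.arcs → p' = pa := fun p' hp' => hIT' p' pa bx hp' hpab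
  have hwx_not : (w,x) ∉ M'.arcs := by
    intro hW
    have hwM : w ∈ M'.verts := (M'.arc_mem _ hW).1
    obtain ⟨a2, ha2T', ha2w⟩ := hbij.2.2 (Finset.mem_coe.2 hwM)
    have ha2T : a2 ∈ T'.verts := Finset.mem_coe.1 ha2T'
    have : (a2, bx) ∈ T'.arcs := (harcs a2 bx ha2T hbxT).2 (by rw [ha2w, hbxx]; exact hW)
    have he := huniq_in a2 this
    exact huw (by rw [← hpau, ← ha2w, he])
  have hMin : ∀ p, (p,x) ∈ M'.arcs → p = u := by
    intro p hp
    rcases hxin p (hMa hp) with e | e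
    · exact e
    · rw [e] at hp; exact absurd hp hwx_not
  have hMout : ∀ c, (x,c) ∈ M'.arcs → c = v := fun c hc => hxout c (hMa hc)
  have huniq_out : ∀ q', (bx, q') ∈ T'.arcs → q' = qb := by
    intro q' hq'
    have hq'T : q' ∈ T'.verts := (T'.arc_mem _ hq').2.1
    have himg : (x, ι q') ∈ M'.arcs := by
      have := (harcs bx q' hbxT hq'T).1 hq'
      rwa [hbxx] at this
    exact hbij.2.1 (Finset.mem_coe.2 hq'T) hqbT' (by rw [hMout (ι q') himg, hqbv])
  obtain ⟨T'', hT''sub, hT''v, hT''a⟩ :=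
    contract_subdiv hIg hVg hsub bx pa qb hpab hbq huniq_in huniq_out
  refine ⟨T'', ⟨M'.verts.erase x, insert (u,v) ((M'.arcs.erase (u,x)).erase (x,v)), ?_⟩,
    hT''sub, ⟨⟨?_, ?_⟩, ?_⟩, ι, ?_, ?_, ?_⟩
  · -- arc_mem of M''
    rintro ⟨c,d⟩ hcd
    simp only [Finset.mem_insert, Finset.mem_erase, Prod.mk.injEq] at hcd
    rcases hcd with ⟨rfl, rfl⟩ | ⟨hn1, hn2, hcd⟩
    · exact ⟨Finset.mem_erase.2 ⟨hux, huM⟩, Finset.mem_erase.2 ⟨hvx, hvM⟩, huveq⟩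
    · obtain ⟨m1, m2, m3⟩ := M'.arc_mem _ hcd
      refine ⟨Finset.mem_erase.2 ⟨?_, m1⟩, Finset.mem_erase.2 ⟨?_, m2⟩, m3⟩
      · intro e
        subst e
        exact hn1 (pext rfl (hMout d hcd))
      · intro e
        subst e
        exact hn2 (pext (hMin c hcd) rfl)
  · -- verts
    intro y hy
    obtain ⟨hyx, hyM⟩ := Finset.mem_erase.1 hy
    have := hMv hyM
    rw [hverts] at this
    rcases Finset.mem_insert.1 this with e | h'
    · exact absurd e hyx
    · exact h'
  · -- arcs
    rintro ⟨c,d⟩ hcd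
    simp only [Finset.mem_insert, Finset.mem_erase, Prod.mk.injEq] at hcd
    rcases hcd with ⟨rfl, rfl⟩ | ⟨hn1, hn2, hcd⟩
    · exact huv
    · rcases (hmem c d).1 (hMa hcd) with e | e | e | ⟨e, _, _⟩
      · exact absurd e hn2
      · exact absurd (e ▸ hcd) hwx_not
      · exact absurd e hn1
      · exact e
  · -- leaves of M''
    intro ℓ hℓ
    have hno : ∀ c, (ℓ, c) ∉ (insert (u,v) ((M'.arcs.erase (u,x)).erase (x,v))) :=
      (outDeg_eq_zero_iff _ ℓ).1 hℓ.2
    have hℓu : ℓ ≠ u := by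
      rintro rfl
      exact hno v (Finset.mem_insert_self _ _)
    obtain ⟨hℓx, hℓM⟩ := Finset.mem_erase.1 hℓ.1
    have hℓM' : ℓ ∈ M'.leaves := by
      refine ⟨hℓM, (outDeg_eq_zero_iff _ _).2 ?_⟩
      intro c hc
      refine hno c (Finset.mem_insert_of_mem (Finset.mem_erase.2 ⟨?_, Finset.mem_erase.2 ⟨?_, hc⟩⟩))
      · exact fun e => hℓx (pfst e)
      · exact fun e => hℓu (pfst e)
    have hℓD' := hMl hℓM'
    have hℓD : ℓ ∈ D.verts := by
      have := hℓD'.1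
      rw [hverts] at this
      rcases Finset.mem_insert.1 this with e | h'
      · exact absurd e hℓx
      · exact h'
    have hℓw : ℓ ≠ w := by
      rintro rfl
      exact (outDeg_eq_zero_iff D' ℓ).1 hℓD'.2 x ((hmem ℓ x).2 (Or.inr (Or.inl rfl)))
    refine ⟨hℓD, (outDeg_eq_zero_iff _ _).2 ?_⟩
    intro c hc
    refine (outDeg_eq_zero_iff D' ℓ).1 hℓD'.2 c ((hmem ℓ c).2 (Or.inr (Or.inr (Or.inr
      ⟨hc, ?_, ?_⟩))))
    · exact fun e => hℓu (pfst e)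
    · exact fun e => hℓw (pfst e)
  · -- BijOn
    rw [hT''v]
    show Set.BijOn ι ↑(T'.verts.erase bx) ↑(M'.verts.erase x)
    rw [Finset.coe_erase, Finset.coe_erase]
    refine ⟨?_, fun a ha b hb he => hbij.2.1 (Set.mem_of_mem_diff ha) (Set.mem_of_mem_diff hb) he, ?_⟩
    · rintro t ⟨htT, htbx⟩
      refine ⟨hbij.1 htT, ?_⟩
      simp only [Set.mem_singleton_iff] at htbx ⊢
      intro e
      exact htbx (hbij.2.1 htT hbxT' (by rw [e, hbxx]))
    · rintro m ⟨hmM, hmx⟩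
      obtain ⟨t, htT, hit⟩ := hbij.2.2 hmM
      refine ⟨t, ⟨htT, ?_⟩, hit⟩
      simp only [Set.mem_singleton_iff] at hmx ⊢
      rintro rfl
      exact hmx (by rw [← hit, hbxx])
  · -- arc correspondence
    intro s t hs ht
    rw [hT''v] at hs ht
    obtain ⟨hsbx, hsT⟩ := Finset.mem_erase.1 hs
    obtain ⟨htbx, htT⟩ := Finset.mem_erase.1 ht
    rw [hT''a]
    constructor
    · intro hst
      simp only [Finset.mem_insert, Finset.mem_erase, Prod.mk.injEq] at hst
      rcases hst with ⟨e1, e2⟩ | ⟨hn1, hn2, hst⟩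
      · have f1 : ι s = u := by rw [e1]; exact hpau
        have f2 : ι t = v := by rw [e2]; exact hqbv
        rw [f1, f2]
        exact Finset.mem_insert_self _ _
      · have himg : (ι s, ι t) ∈ M'.arcs := (harcs s t hsT htT).1 hst
        refine Finset.mem_insert_of_mem (Finset.mem_erase.2 ⟨?_, Finset.mem_erase.2 ⟨?_, himg⟩⟩)
        · intro e
          have es : s = bx := hbij.2.1 (Finset.mem_coe.2 hsT) hbxT'
            ((pfst e).trans hbxx.symm)
          rw [es] at hst
          exact hn1 (pext es (huniq_out t hst))
        · intro e
          have et : t = bx := hbij.2.1 (Finset.mem_coe.2 htT) hbxT'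
            ((psnd e).trans hbxx.symm)
          rw [et] at hst
          exact hn2 (pext (huniq_in s hst) et)
    · intro hst
      simp only [Finset.mem_insert, Finset.mem_erase, Prod.mk.injEq] at hst
      rcases hst with ⟨e1, e2⟩ | ⟨hn1, hn2, hst⟩
      · have es : s = pa := hbij.2.1 (Finset.mem_coe.2 hsT) hpaT' (by rw [e1, hpau])
        have et : t = qb := hbij.2.1 (Finset.mem_coe.2 htT) hqbT' (by rw [e2, hqbv])
        simp only [Finset.mem_insert, Prod.mk.injEq]
        exact Or.inl ⟨es, et⟩
      · have hst' : (s,t) ∈ T'.arcs := (harcs s t hsT htT).2 hst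
        refine Finset.mem_insert_of_mem (Finset.mem_erase.2 ⟨?_, Finset.mem_erase.2 ⟨?_, hst'⟩⟩)
        · intro e
          have es : s = bx := pfst e
          have et : t = qb := psnd e
          exact hn1 (pext (by rw [es]; exact hbxx) (by rw [et]; exact hqbv))
        · intro e
          have es : s = pa := pfst e
          have et : t = bx := psnd e
          exact hn2 (pext (by rw [es]; exact hpau) (by rw [et]; exact hbxx))
  · -- leaves fixed
    intro ℓ hℓ
    have hno : ∀ c, (ℓ, c) ∉ T''.arcs := (outDeg_eq_zero_iff _ ℓ).1 hℓ.2
    have hℓv := hℓ.1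
    rw [hT''v] at hℓv
    obtain ⟨hℓbx, hℓT⟩ := Finset.mem_erase.1 hℓv
    have hℓpa : ℓ ≠ pa := by
      rintro rfl
      exact hno qb (by rw [hT''a]; exact Finset.mem_insert_self _ _)
    refine hleaf ℓ ⟨hℓT, (outDeg_eq_zero_iff _ _).2 ?_⟩
    intro c hc
    refine hno c (by rw [hT''a]; exact Finset.mem_insert_of_mem (Finset.mem_erase.2
      ⟨fun e => hℓbx (pfst e), Finset.mem_erase.2
        ⟨fun e => hℓpa (pfst e), hc⟩⟩))

lemma firm_backward (h : InSplit D D') (hIg : InD1 Tg) (hVg : NoV11 Tg) (hRg : RootBig Tg)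
    (hf : FirmDisp D' Tg) : FirmDisp D Tg := by
  obtain ⟨v, u, w, x, h3, huv, hwv, huw, hx, hverts, hmem⟩ := inSplit_mem h
  obtain ⟨T', M', hsub, hLM, hiso⟩ := hf
  by_cases hxM : x ∈ M'.verts
  · -- x is used by M'
    obtain ⟨ι, hbij, harcs, hleaf⟩ := hiso
    have hIT' : InD1 T' := chain_pres (P := InD1) (fun h hi => subdivStep_InD1 h hi) hsub hIg
    have hRT' : RootBig T' :=
      chain_pres (P := RootBig) (fun h hr => subdivStep_RootBig h hr) hsub hRg
    have hux : u ≠ x := mem_ne (D.arc_mem _ huv).1 hx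
    have hvx : v ≠ x := mem_ne (D.arc_mem _ huv).2.1 hx
    have hwx : w ≠ x := mem_ne (D.arc_mem _ hwv).1 hx
    have hxout : ∀ c, (x,c) ∈ D'.arcs → c = v := by
      intro c hc
      rcases (hmem x c).1 hc with e | e | e | ⟨e, _, _⟩
      · exact absurd (pfst e) (Ne.symm hux)
      · exact absurd (pfst e) (Ne.symm hwx)
      · exact psnd e
      · exact absurd (D.arc_mem _ e).1 hx
    by_cases hxo : ∃ c, (x,c) ∈ M'.arcs
    · obtain ⟨c, hc0⟩ := hxo
      have hxv' : (x,v) ∈ M'.arcs := by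
        have := hxout c (hLM.1.2 hc0)
        rwa [this] at hc0
      by_cases hxi : ∃ p, (p,x) ∈ M'.arcs
      · obtain ⟨p', hp'⟩ := hxi
        have hp'D := hLM.1.2 hp'
        rcases (hmem p' x).1 hp'D with e | e | e | ⟨e, _, _⟩
        · -- p' = u
          have : p' = u := pfst e
          rw [this] at hp'
          exact firm_backward_core huv hwv huw hx hverts hmem hIg hVg hsub hLM
            ⟨ι, hbij, harcs, hleaf⟩ hp' hxv'
        · -- p' = w : swap roles of u and w
          have : p' = w := pfst e
          rw [this] at hp'
          exact firm_backward_core hwv huv (Ne.symm huw) hx hverts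
            (fun c d => (hmem c d).trans (by tauto)) hIg hVg hsub hLM
            ⟨ι, hbij, harcs, hleaf⟩ hp' hxv'
        · exact absurd (psnd e) (Ne.symm hvx)
        · exact absurd (D.arc_mem _ e).2.1 hx
      · -- no in-arc of x in M' : contradiction with RootBig T'
        obtain ⟨bx, hbxT', hbxx⟩ := hbij.2.2 (Finset.mem_coe.2 hxM)
        have hbxT : bx ∈ T'.verts := Finset.mem_coe.1 hbxT'
        have hbxin : ∀ pp, (pp, bx) ∉ T'.arcs := by
          intro pp hpp
          have hppT : pp ∈ T'.verts := (T'.arc_mem _ hpp).1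
          refine hxi ⟨ι pp, ?_⟩
          have := (harcs pp bx hppT hbxT).1 hpp
          rwa [hbxx] at this
        obtain ⟨c1, c2, h1, h2, hne⟩ := hRT' bx hbxT hbxin
        have hc1T : c1 ∈ T'.verts := (T'.arc_mem _ h1).2.1
        have hc2T : c2 ∈ T'.verts := (T'.arc_mem _ h2).2.1
        have e1 : ι c1 = v := by
          have := (harcs bx c1 hbxT hc1T).1 h1
          rw [hbxx] at this
          exact hxout (ι c1) (hLM.1.2 this)
        have e2 : ι c2 = v := by
          have := (harcs bx c2 hbxT hc2T).1 h2
          rw [hbxx] at this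
          exact hxout (ι c2) (hLM.1.2 this)
        exact absurd (hbij.2.1 (Finset.mem_coe.2 hc1T) (Finset.mem_coe.2 hc2T)
          (by rw [e1, e2])) hne
    · -- x has no out-arc in M' : x would be a leaf of D', contradiction
      have hxl : x ∈ M'.leaves :=
        ⟨hxM, (outDeg_eq_zero_iff _ _).2 (fun c hc => hxo ⟨c, hc⟩)⟩
      have hxD' := hLM.2 hxl
      exact absurd ((hmem x v).2 (Or.inr (Or.inr (Or.inl rfl))))
        ((outDeg_eq_zero_iff D' x).1 hxD'.2 v)
  · -- x unused : reuse the witnesses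
    refine ⟨T', M', hsub, ⟨⟨?_, ?_⟩, ?_⟩, hiso⟩
    · intro y hy
      have := hLM.1.1 hy
      rw [hverts] at this
      rcases Finset.mem_insert.1 this with e | h'
      · exact absurd (e ▸ hy) hxM
      · exact h'
    · rintro ⟨c,d⟩ hcd
      have hcM : c ∈ M'.verts := (M'.arc_mem _ hcd).1
      have hdM : d ∈ M'.verts := (M'.arc_mem _ hcd).2.1
      rcases (hmem c d).1 (hLM.1.2 hcd) with e | e | e | ⟨e, _, _⟩
      · exact absurd ((psnd e) ▸ hdM) hxM
      · exact absurd ((psnd e) ▸ hdM) hxM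
      · exact absurd ((pfst e) ▸ hcM) hxM
      · exact e
    · intro ℓ hℓ
      have hℓD' := hLM.2 hℓ
      have hℓM : ℓ ∈ M'.verts := hℓ.1
      have hℓx : ℓ ≠ x := fun e => hxM (e ▸ hℓM)
      have hℓD : ℓ ∈ D.verts := by
        have := hℓD'.1
        rw [hverts] at this
        rcases Finset.mem_insert.1 this with e | h'
        · exact absurd e hℓx
        · exact h'
      have hℓu : ℓ ≠ u := by
        rintro rfl
        exact (outDeg_eq_zero_iff D' ℓ).1 hℓD'.2 x ((hmem ℓ x).2 (Or.inl rfl))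
      have hℓw : ℓ ≠ w := by
        rintro rfl
        exact (outDeg_eq_zero_iff D' ℓ).1 hℓD'.2 x ((hmem ℓ x).2 (Or.inr (Or.inl rfl)))
      refine ⟨hℓD, (outDeg_eq_zero_iff _ _).2 ?_⟩
      intro c hc
      exact (outDeg_eq_zero_iff D' ℓ).1 hℓD'.2 c ((hmem ℓ c).2 (Or.inr (Or.inr (Or.inr
        ⟨hc, fun e => hℓu (pfst e), fun e => hℓw (pfst e)⟩))))

end Firm

section Assemble
variable {T N N' Tg : Digr V}

lemma tree_InD1 (hT : IsPhyloTree T) : InD1 T := by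
  intro p q r hp hq
  have hr : r ∈ T.verts := (T.arc_mem _ hp).2.1
  have h1 := hT.2 r hr
  rw [Digr.inDeg, Finset.card_le_one] at h1
  exact pfst (h1 (p,r) (Finset.mem_filter.2 ⟨hp, rfl⟩) (q,r) (Finset.mem_filter.2 ⟨hq, rfl⟩))

lemma tree_RootBig (hT : T.IsNetwork) : RootBig T := by
  intro b hb hno
  have hroot : T.IsRoot b := ⟨hb, (inDeg_eq_zero_iff T b).2 hno⟩
  have h2 := (hT.2 b hroot).1
  have h2' : 1 < T.outDeg b := lt_of_lt_of_le one_lt_two h2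
  obtain ⟨a0, ha0⟩ : ∃ c, (b,c) ∈ T.arcs := by
    have hpos : 0 < (T.arcs.filter fun z => z.1 = b).card := by
      have : (0:ℕ) < T.outDeg b := by omega
      rwa [Digr.outDeg] at this
    obtain ⟨⟨b1,b2⟩, hm⟩ := Finset.card_pos.1 hpos
    obtain ⟨hm1, hm2⟩ := Finset.mem_filter.1 hm
    simp only at hm2
    exact ⟨b2, by rwa [hm2] at hm1⟩
  obtain ⟨c', hc', hne⟩ := exists_out_ne T a0 h2'
  exact ⟨a0, c', ha0, hc', Ne.symm hne⟩

lemma tree_NoV11 (hN : T.IsNetwork) (hd : ∀ v ∈ T.verts, T.inDeg v ≤ 1) : NoV11 T := by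
  intro p r q hpr hrq
  have hr : r ∈ T.verts := (T.arc_mem _ hpr).2.1
  obtain ⟨r₀, hr₀, _⟩ := hN.1.2
  have hrne : r ≠ r₀ := by
    rintro rfl
    exact absurd hpr ((inDeg_eq_zero_iff T r).1 hr₀.2 p)
  have hXor := (hN.2 r₀ hr₀).2 r hr hrne
  have hin1 : T.inDeg r = 1 := by
    have hle := hd r hr
    have hpos : 0 < T.inDeg r := by
      rw [Digr.inDeg]
      exact Finset.card_pos.2 ⟨(p,r), Finset.mem_filter.2 ⟨hpr, rfl⟩⟩
    omega
  have hout_ne : T.outDeg r ≠ 1 := by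
    rcases hXor with ⟨_, h⟩ | ⟨_, h2⟩
    · exact h
    · exact absurd hin1 h2
  have hout1 : 0 < T.outDeg r := by
    rw [Digr.outDeg]
    exact Finset.card_pos.2 ⟨(r,q), Finset.mem_filter.2 ⟨hrq, rfl⟩⟩
  exact exists_out_ne T q (by omega)

lemma firm_iff_chain (hc : Relation.ReflTransGen InSplit N N') (hI : InD1 Tg)
    (hV : NoV11 Tg) (hR : RootBig Tg) : FirmDisp N Tg ↔ FirmDisp N' Tg := by
  induction hc with
  | refl => exact Iff.rfl
  | tail _ h2 ih =>
    exact ih.trans ⟨fun hf => firm_forward h2 hI hf, fun hf => firm_backward h2 hI hV hR hf⟩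

lemma refl_of_no_step {R : Digr V → Digr V → Prop} {A B : Digr V}
    (h : Relation.ReflTransGen R A B) (hno : ∀ C, ¬ R A C) : B = A := by
  rcases Relation.ReflTransGen.cases_head h with e | ⟨c, hc, _⟩
  · exact e.symm
  · exact absurd hc (hno c)

lemma no_insplit (h : ∀ vv ∈ N.verts, N.inDeg vv ≤ 2) : ∀ Z, ¬ InSplit N Z := by
  rintro Z ⟨v, u, w, x, h3, huv, -, -, -, -, -⟩
  have hv : v ∈ N.verts := (N.arc_mem _ huv).2.1
  have := h v hv
  omega

lemma no_outsplit (h : OutLE2 N) : ∀ Z, ¬ OutSplit N Z := by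
  rintro Z ⟨v, u, w, x, h3, -, -, -, -, -, -⟩
  have := outDeg_le_two_of_outLE2 N h v
  omega

end Assemble
end S9
/-- for `N` with maximum out-degree 2 and `N'` a binary
in-resolution of `N`: firm and soft display are preserved. -/
theorem stmt9 {V : Type} [DecidableEq V] (N N' T : Digr V)
    (hN : N.IsNetwork) (hdeg : N.maxOutDeg = 2) (hT : IsPhyloTree T)
    (hres : BinInRes N N') :
    (FirmDisp N T ↔ FirmDisp N' T) ∧ (SoftDisp N T ↔ SoftDisp N' T) := by
  have hIT : S9.InD1 T := S9.tree_InD1 hT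
  have hVT : S9.NoV11 T := S9.tree_NoV11 hT.1 hT.2
  have hRT : S9.RootBig T := S9.tree_RootBig hT.1
  have hOut2N : S9.OutLE2 N := S9.outLE2_of_deg_le N (fun vv hv => by
    have h1 : N.outDeg vv ≤ N.maxOutDeg := Finset.le_sup hv
    rwa [hdeg] at h1)
  refine ⟨S9.firm_iff_chain hres.1 hIT hVT hRT, ?_, ?_⟩
  · rintro ⟨N₁, T₁, ⟨D'', hinN, houtN⟩, hTres, hf⟩
    have hOutD'' : S9.OutLE2 D'' :=
      S9.chain_pres (P := S9.OutLE2) (fun h ho => S9.inSplit_OutLE2 h ho) hinN.1 hOut2N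
    have hN1 : N₁ = D'' := S9.refl_of_no_step houtN.1 (S9.no_outsplit hOutD'')
    obtain ⟨T₂, hinT, houtT⟩ := hTres
    have hT2 : T₂ = T := S9.refl_of_no_step hinT.1 (S9.no_insplit (fun vv _ =>
      le_trans (S9.inDeg_le_one_of_InD1 T hIT vv) one_le_two))
    rw [hT2] at houtT
    have hIT1 : S9.InD1 T₁ :=
      S9.chain_pres (P := S9.InD1) (fun h hi => S9.outSplit_InD1 h hi) houtT.1 hIT
    have hVT1 : S9.NoV11 T₁ :=
      S9.chain_pres (P := S9.NoV11) (fun h hi => S9.outSplit_NoV11 h hi) houtT.1 hVT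
    have hRT1 : S9.RootBig T₁ :=
      S9.chain_pres (P := S9.RootBig) (fun h hi => S9.outSplit_RootBig h hi) houtT.1 hRT
    have h1 : FirmDisp N T₁ := (S9.firm_iff_chain hinN.1 hIT1 hVT1 hRT1).2 (hN1 ▸ hf)
    have h2 : FirmDisp N' T₁ := (S9.firm_iff_chain hres.1 hIT1 hVT1 hRT1).1 h1
    have hOutN' : S9.OutLE2 N' :=
      S9.chain_pres (P := S9.OutLE2) (fun h ho => S9.inSplit_OutLE2 h ho) hres.1 hOut2N
    exact ⟨N', T₁, ⟨N', ⟨Relation.ReflTransGen.refl, hres.2⟩,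
      ⟨Relation.ReflTransGen.refl, fun vv _ => S9.outDeg_le_two_of_outLE2 N' hOutN' vv⟩⟩,
      ⟨T, ⟨Relation.ReflTransGen.refl, fun vv _ =>
        le_trans (S9.inDeg_le_one_of_InD1 T hIT vv) one_le_two⟩, houtT⟩, h2⟩
  · rintro ⟨N₁, T₁, ⟨D'', hinN', houtN'⟩, hTres, hf⟩
    have hD'' : D'' = N' := S9.refl_of_no_step hinN'.1 (S9.no_insplit (fun vv hv => hres.2 vv hv))
    exact ⟨N₁, T₁, ⟨N', hres, hD'' ▸ houtN'⟩, hTres, hf⟩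
end
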